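/- arXiv:1108.0207 — 9 statements merged into one kernel-verified Lean document; each statement's English description precedes it below -/
import Mathlib

section
/- Let a ∈ C²(ℝ) with a(s) ≥ ν > 0 for all s ∈ ℝ, let k > 0 and a₁ > 0, and assume lim_{s→+∞} a(s)/s^k = a₁. Let g be the solution of g'(s) = 1/√(a(g(s))), g(0) = 0. Then lim_{s→+∞} g(s)/s^{2/(k+2)} = c₁, where c₁ = ((k+2)/(2√a₁))^{2/(k+2)}. -/
/-!
Set `p = (k + 2) / 2`. Along a solution, `(g ^ p)' = p g ^ (k / 2) / √(a ∘ g) = p / √(a(g) / g ^ k)`,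
which tends to `p / √a₁` once `g → ∞`; a function whose derivative tends to `c` grows like `c s`,
so `g ^ p ~ (p / √a₁) s`, and taking `p`-th roots gives the claim. The same growth lemma shows
`g → ∞`: a bounded monotone `g` would converge to some `ℓ`, forcing `g' → 1 / √(a ℓ) > 0`.
-/

open Filter Real Topology Asymptotics

theorem isLittleO_id_of_tendsto_deriv_zero {f f' : ℝ → ℝ}
    (hf : ∀ᶠ x in atTop, HasDerivAt f (f' x) x) (hf' : Tendsto f' atTop (𝓝 0)) :
    f =o[atTop] id := by
  refine isLittleO_iff.2 fun ε hε => ?_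
  have hsmall : ∀ᶠ x in atTop, HasDerivAt f (f' x) x ∧ ‖f' x‖ ≤ ε / 2 ∧ 0 ≤ x :=
    hf.and ((hf'.norm.eventually (ge_mem_nhds (by simpa using half_pos hε))).and
      (eventually_ge_atTop 0))
  obtain ⟨M, hM⟩ := eventually_atTop.1 hsmall
  have hM0 : 0 ≤ M := (hM M le_rfl).2.2
  filter_upwards [eventually_ge_atTop M, eventually_ge_atTop (2 * ‖f M‖ / ε)] with x hxM hx
  have hmvt : ‖f x - f M‖ ≤ ε / 2 * (x - M) :=
    norm_image_sub_le_of_norm_deriv_le_segment'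
      (fun y hy => (hM y hy.1).1.hasDerivWithinAt) (fun y hy => (hM y hy.1).2.1) x ⟨hxM, le_rfl⟩
  have hx' : ‖f M‖ ≤ ε / 2 * x := by
    rw [div_le_iff₀ hε] at hx; linarith
  calc ‖f x‖ ≤ ‖f M‖ + ‖f x - f M‖ := norm_le_norm_add_norm_sub' _ _
    _ ≤ ε * ‖id x‖ := by
      rw [id, Real.norm_of_nonneg (hM0.trans hxM)]; nlinarith

theorem tendsto_div_id_of_tendsto_deriv {f f' : ℝ → ℝ} {c : ℝ}
    (hf : ∀ᶠ x in atTop, HasDerivAt f (f' x) x) (hf' : Tendsto f' atTop (𝓝 c)) :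
    Tendsto (fun x => f x / x) atTop (𝓝 c) := by
  have hderiv : ∀ᶠ x in atTop, HasDerivAt (fun x => f x - c * x) (f' x - c) x := by
    filter_upwards [hf] with x hx
    exact (hx.sub ((hasDerivAt_id' x).const_mul c)).congr_deriv (by ring)
  have hrem : (fun x => f x - c * x) =o[atTop] id :=
    isLittleO_id_of_tendsto_deriv_zero hderiv (by simpa using hf'.sub_const c)
  have := hrem.tendsto_div_nhds_zero.add_const c
  rw [zero_add] at this
  refine this.congr' ?_
  filter_upwards [eventually_ne_atTop 0] with x hx
  simp only [id]
  field_simp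
  ring

section InvSqrtODE

variable {a g : ℝ → ℝ}

theorem tendsto_atTop_of_hasDerivAt_inv_sqrt (ha : Continuous a) (hpos : ∀ u, 0 < a u)
    (hg : ∀ s, HasDerivAt g (1 / √(a (g s))) s) : Tendsto g atTop atTop := by
  have hmono : Monotone g := monotone_of_hasDerivAt_nonneg hg fun s => by positivity
  refine tendsto_atTop_atTop_of_monotone' hmono fun hbdd => ?_
  set ℓ := ⨆ s, g s
  have hℓ : Tendsto g atTop (𝓝 ℓ) := tendsto_atTop_ciSup hmono hbdd
  have hne : √(a ℓ) ≠ 0 := (Real.sqrt_pos.2 (hpos ℓ)).ne'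
  have hgrowth : Tendsto (fun s => g s / s) atTop (𝓝 (1 / √(a ℓ))) :=
    tendsto_div_id_of_tendsto_deriv (Eventually.of_forall hg)
      (tendsto_const_nhds.div ((ha.tendsto ℓ).comp hℓ).sqrt hne)
  have hbounded : Tendsto (fun s => g s / s) atTop (𝓝 0) := hℓ.div_atTop tendsto_id
  exact one_div_ne_zero hne (tendsto_nhds_unique hgrowth hbounded)

theorem tendsto_rpow_div_of_hasDerivAt_inv_sqrt {k a₁ : ℝ} (ha₁ : 0 < a₁)
    (hlim : Tendsto (fun u => a u / u ^ k) atTop (𝓝 a₁))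
    (hg : ∀ s, HasDerivAt g (1 / √(a (g s))) s) (hgtop : Tendsto g atTop atTop) :
    Tendsto (fun s => g s ^ ((k + 2) / 2) / s) atTop (𝓝 ((k + 2) / 2 / √a₁)) := by
  refine tendsto_div_id_of_tendsto_deriv (f' := fun s => (k + 2) / 2 / √(a (g s) / g s ^ k))
    ?_ (tendsto_const_nhds.div ((hlim.comp hgtop).sqrt) (Real.sqrt_pos.2 ha₁).ne')
  filter_upwards [hgtop.eventually_gt_atTop 0] with s hs
  convert (hg s).rpow_const (p := (k + 2) / 2) (Or.inl hs.ne') using 1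
  have hsqrt : √(g s ^ k) = g s ^ ((k + 2) / 2 - 1) := by
    rw [Real.sqrt_eq_rpow, ← Real.rpow_mul hs.le]; ring_nf
  rw [Real.sqrt_div' _ (by positivity), hsqrt, div_div_eq_mul_div]
  ring

end InvSqrtODE

theorem g_asymptotics_at_infinity_general
    (a : ℝ → ℝ) (ν : ℝ) (hν : 0 < ν)
    (ha : ContDiff ℝ 2 a) (hbound : ∀ s, ν ≤ a s)
    (k a₁ : ℝ) (hk : 0 < k) (ha₁ : 0 < a₁)
    (hlim : Tendsto (fun s : ℝ => a s / s ^ k) atTop (𝓝 a₁))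
    (g : ℝ → ℝ)
    (hg : ∀ s, HasDerivAt g (1 / Real.sqrt (a (g s))) s) :
    Tendsto (fun s : ℝ => g s / s ^ (2 / (k + 2))) atTop
      (𝓝 (((k + 2) / (2 * Real.sqrt a₁)) ^ (2 / (k + 2)))) := by
  have hgtop := tendsto_atTop_of_hasDerivAt_inv_sqrt ha.continuous
    (fun u => hν.trans_le (hbound u)) hg
  have hroot := (tendsto_rpow_div_of_hasDerivAt_inv_sqrt ha₁ hlim hg hgtop).rpow_const
    (p := 2 / (k + 2)) (Or.inr (by positivity))
  rw [div_div] at hroot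
  refine hroot.congr' ?_
  filter_upwards [eventually_gt_atTop 0, hgtop.eventually_gt_atTop 0] with s hs hgs
  rw [Real.div_rpow (by positivity) hs.le, ← Real.rpow_mul hgs.le,
    div_mul_div_comm, mul_comm, div_self (by positivity), Real.rpow_one]

theorem g_asymptotics_at_infinity
    (a : ℝ → ℝ) (ν : ℝ) (hν : 0 < ν)
    (ha : ContDiff ℝ 2 a) (hbound : ∀ s, ν ≤ a s)
    (k a₁ : ℝ) (hk : 0 < k) (ha₁ : 0 < a₁)
    (hlim : Tendsto (fun s : ℝ => a s / s ^ k) atTop (𝓝 a₁))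
    (g : ℝ → ℝ)
    (hg : ∀ s, HasDerivAt g (1 / Real.sqrt (a (g s))) s) (hg0 : g 0 = 0) :
    Tendsto (fun s : ℝ => g s / s ^ (2 / (k + 2))) atTop
      (𝓝 (((k + 2) / (2 * Real.sqrt a₁)) ^ (2 / (k + 2)))) :=
  g_asymptotics_at_infinity_general a ν hν ha hbound k a₁ hk ha₁ hlim g hg
end

section
/- Let a ∈ C²(ℝ) with a(s) ≥ ν > 0 for all s ∈ ℝ, let k > 0 and a₁ > 0, and assume lim_{s→+∞} a(s)/s^k = a₁. Let g be the solution of g'(s) = 1/√(a(g(s))), g(0) = 0, and let c₁ = ((k+2)/(2√a₁))^{2/(k+2)}. Then the inverse function g⁻¹ satisfies lim_{t→+∞} g⁻¹(t)/t^{(k+2)/2} = (1/c₁)^{(k+2)/2}. -/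
open Filter Real Topology

/-- One-sided L'Hôpital-type bound: if `f' = φ` everywhere and
`φ t / (p * t ^ (p-1)) → L`, then eventually `f t / t ^ p < b` for any `b > L`. -/
lemma lhopital_upper_aux (f φ : ℝ → ℝ) (L p : ℝ) (hp : 0 < p)
    (hf : ∀ t, HasDerivAt f (φ t) t)
    (hφ : Tendsto (fun t => φ t / (p * t ^ (p - 1))) atTop (𝓝 L))
    (b : ℝ) (hb : L < b) :
    ∀ᶠ t in atTop, f t / t ^ p < b := by
  set ε : ℝ := (b - L) / 3 with hε
  have hεpos : 0 < ε := by rw [hε]; linarith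
  have h1 : ∀ᶠ t in atTop, φ t / (p * t ^ (p - 1)) < L + ε :=
    hφ.eventually_lt_const (by linarith)
  obtain ⟨T₀, hT₀⟩ := eventually_atTop.1 (h1.and (eventually_gt_atTop 0))
  set T : ℝ := max T₀ 1 with hTdef
  have hT1 : (1 : ℝ) ≤ T := le_max_right _ _
  have hTpos : (0 : ℝ) < T := lt_of_lt_of_le one_pos hT1
  have hbound : ∀ t, T ≤ t → φ t < (L + ε) * (p * t ^ (p - 1)) := by
    intro t ht
    have ht' : T₀ ≤ t := le_trans (le_max_left _ _) ht
    obtain ⟨h1', h2'⟩ := hT₀ t ht'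
    have hden : 0 < p * t ^ (p - 1) := mul_pos hp (Real.rpow_pos_of_pos h2' _)
    exact (div_lt_iff₀ hden).1 h1'
  -- F is monotone on [T, ∞)
  set F : ℝ → ℝ := fun t => (L + ε) * t ^ p - f t with hF
  have hFderiv : ∀ t, 0 < t →
      HasDerivAt F ((L + ε) * (p * t ^ (p - 1)) - φ t) t := by
    intro t ht
    exact (((Real.hasDerivAt_rpow_const (Or.inl (ne_of_gt ht))).const_mul
      (L + ε)).sub (hf t))
  have hmono : MonotoneOn F (Set.Ici T) := by
    apply monotoneOn_of_deriv_nonneg (convex_Ici T)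
    · intro t ht
      exact (hFderiv t (lt_of_lt_of_le hTpos ht)).continuousAt.continuousWithinAt
    · intro t ht
      rw [interior_Ici] at ht
      exact (hFderiv t (lt_trans hTpos ht)).differentiableAt.differentiableWithinAt
    · intro t ht
      rw [interior_Ici] at ht
      rw [(hFderiv t (lt_trans hTpos ht)).deriv]
      have := hbound t (le_of_lt ht)
      linarith
  set C : ℝ := f T - (L + ε) * T ^ p with hC
  have key : ∀ t, T ≤ t → f t ≤ C + (L + ε) * t ^ p := by
    intro t ht
    have := hmono (Set.self_mem_Ici) (Set.mem_Ici.2 ht) ht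
    simp only [hF] at this
    rw [hC]; linarith
  have hC0 : Tendsto (fun t : ℝ => C / t ^ p) atTop (𝓝 0) :=
    tendsto_const_nhds.div_atTop (tendsto_rpow_atTop hp)
  filter_upwards [hC0.eventually_lt_const hεpos, eventually_ge_atTop T] with t h3 h4
  have htpos : 0 < t := lt_of_lt_of_le hTpos h4
  have htp : 0 < t ^ p := Real.rpow_pos_of_pos htpos p
  have h5 : f t / t ^ p ≤ (C + (L + ε) * t ^ p) / t ^ p := by
    gcongr
    exact key t h4
  rw [add_div, mul_div_assoc, div_self (ne_of_gt htp), mul_one] at h5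
  calc f t / t ^ p ≤ C / t ^ p + (L + ε) := h5
    _ < ε + (L + ε) := by linarith
    _ < b := by rw [hε]; linarith

/-- L'Hôpital-type limit for `∞/∞` with power denominator. -/
lemma lhopital_rpow_aux (f φ : ℝ → ℝ) (L p : ℝ) (hp : 0 < p)
    (hf : ∀ t, HasDerivAt f (φ t) t)
    (hφ : Tendsto (fun t => φ t / (p * t ^ (p - 1))) atTop (𝓝 L)) :
    Tendsto (fun t => f t / t ^ p) atTop (𝓝 L) := by
  rw [tendsto_order]
  constructor
  · intro b hb
    have hneg : ∀ᶠ t in atTop, (-f t) / t ^ p < -b := by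
      apply lhopital_upper_aux (fun t => -f t) (fun t => -φ t) (-L) p hp
        (fun t => (hf t).neg) _ (-b) (by linarith)
      have : (fun t => -φ t / (p * t ^ (p - 1))) =
          fun t => -(φ t / (p * t ^ (p - 1))) := by
        funext t; ring
      rw [this]
      exact hφ.neg
    filter_upwards [hneg] with t ht
    rw [neg_div] at ht
    linarith
  · intro b hb
    exact lhopital_upper_aux f φ L p hp hf hφ b hb

theorem g_inv_asymptotics_at_infinity
    (a : ℝ → ℝ) (ν : ℝ) (hν : 0 < ν)
    (ha : ContDiff ℝ 2 a) (hbound : ∀ s, ν ≤ a s)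
    (k a₁ : ℝ) (hk : 0 < k) (ha₁ : 0 < a₁)
    (hlim : Tendsto (fun s : ℝ => a s / s ^ k) atTop (𝓝 a₁))
    (g : ℝ → ℝ)
    (hg : ∀ s, HasDerivAt g (1 / Real.sqrt (a (g s))) s) (hg0 : g 0 = 0)
    (hbij : Function.Bijective g)
    (c₁ : ℝ) (hc₁ : c₁ = ((k + 2) / (2 * Real.sqrt a₁)) ^ (2 / (k + 2))) :
    Tendsto (fun t : ℝ => Function.invFun g t / t ^ ((k + 2) / 2)) atTop
      (𝓝 ((1 / c₁) ^ ((k + 2) / 2))) := by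
  have hapos : ∀ x, 0 < a x := fun x => lt_of_lt_of_le hν (hbound x)
  have hsq : ∀ x, 0 < Real.sqrt (a x) := fun x => Real.sqrt_pos.2 (hapos x)
  -- g is strictly monotone
  have hmono : StrictMono g := by
    apply strictMono_of_deriv_pos
    intro x
    rw [(hg x).deriv]
    exact div_pos one_pos (hsq _)
  -- invFun g coincides with the order-iso inverse, hence continuous
  set e := StrictMono.orderIsoOfSurjective g hmono hbij.2 with he
  have hinv : ∀ y, g (Function.invFun g y) = y := Function.rightInverse_invFun hbij.2
  have hfe : Function.invFun g = ⇑e.symm := by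
    funext y
    apply hbij.1
    rw [hinv y]
    exact (StrictMono.orderIsoOfSurjective_self_symm_apply g hmono hbij.2 y).symm
  have hcont : Continuous (Function.invFun g) := by
    rw [hfe]; exact OrderIso.continuous e.symm
  -- derivative of the inverse function
  have hfderiv : ∀ t, HasDerivAt (Function.invFun g) (Real.sqrt (a t)) t := by
    intro t
    have h1 : HasDerivAt g (1 / Real.sqrt (a (g (Function.invFun g t))))
        (Function.invFun g t) := hg _
    rw [hinv t] at h1
    have h2 := HasDerivAt.of_local_left_inverse hcont.continuousAt h1
      (ne_of_gt (div_pos one_pos (hsq t))) (Filter.Eventually.of_forall hinv)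
    simpa [one_div, inv_inv] using h2
  set p : ℝ := (k + 2) / 2 with hpdef
  have hp : 0 < p := by rw [hpdef]; linarith
  -- limit of the derivative quotient
  have hφ : Tendsto (fun t => Real.sqrt (a t) / (p * t ^ (p - 1))) atTop
      (𝓝 (Real.sqrt a₁ / p)) := by
    have h1 : Tendsto (fun t : ℝ => Real.sqrt (a t / t ^ k) / p) atTop
        (𝓝 (Real.sqrt a₁ / p)) :=
      ((Real.continuous_sqrt.tendsto a₁).comp hlim).div_const p
    apply h1.congr'
    filter_upwards [eventually_gt_atTop (0 : ℝ)] with t ht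
    have htk : Real.sqrt (t ^ k) = t ^ (k / 2) := by
      rw [Real.sqrt_eq_rpow, ← Real.rpow_mul (le_of_lt ht)]
      ring_nf
    rw [Real.sqrt_div (le_of_lt (hapos t)), htk]
    have hp1 : p - 1 = k / 2 := by rw [hpdef]; ring
    rw [hp1]
    rw [div_div, mul_comm]
  -- identify the limit value
  have hL : (1 / c₁ : ℝ) ^ p = Real.sqrt a₁ / p := by
    have hsa : 0 < Real.sqrt a₁ := Real.sqrt_pos.2 ha₁
    have hb : (0 : ℝ) < (k + 2) / (2 * Real.sqrt a₁) :=
      div_pos (by linarith) (by linarith)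
    have hexp : (2 / (k + 2)) * ((k + 2) / 2) = 1 := by
      field_simp
    rw [hpdef, hc₁, one_div, ← Real.inv_rpow (le_of_lt hb),
      ← Real.rpow_mul (inv_nonneg.2 (le_of_lt hb)), hexp, Real.rpow_one, inv_div]
    rw [div_div_eq_mul_div]
    ring
  have hmain := lhopital_rpow_aux (Function.invFun g) (fun t => Real.sqrt (a t))
    (Real.sqrt a₁ / p) p hp hfderiv hφ
  rw [hL]
  exact hmain
end

section
/- Let a ∈ C²(ℝ) with a(s) ≥ ν > 0 for all s ∈ ℝ, let k > 0 and a₁ > 0, and assume lim_{s→+∞} a(s)/s^k = a₁. Let g be the solution of g'(s) = 1/√(a(g(s))), g(0) = 0, and let c₁ = ((k+2)/(2√a₁))^{2/(k+2)}. Then: lim_{s→+∞} s·(g'(s))² = 0 if k > 2; lim_{s→+∞} s·(g'(s))² = 1/(a₁ c₁^k) if k = 2; and s·(g'(s))² → +∞ as s → +∞ if 0 < k < 2. -/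
open Filter Real Topology Asymptotics

/-!
Along the solution, `s · g'(s)² = s / a(g(s))`. Since `a` is continuous and positive, `g` increases
to `+∞`, so `a(g)/g^k → a₁`. Then `(g^((k+2)/2))' = ((k+2)/2) · √(g^k / a(g)) → (k+2)/(2√a₁) =: L`,
and hence `g(s)^((k+2)/2) ~ L s`. Combining,
`s · g'(s)² · g(s)^((k-2)/2) = (s / g^((k+2)/2)) · (g^k / a(g)) → 1/(L a₁)`,
and the three regimes are those of `g(s)^((2-k)/2)` with `g → +∞`; for `k = 2`, `c₁² = L`.
-/

theorem isLittleO_id_of_hasDerivAt_of_tendsto_zero {h h' : ℝ → ℝ}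
    (hd : ∀ᶠ s in atTop, HasDerivAt h (h' s) s) (h'0 : Tendsto h' atTop (𝓝 0)) :
    h =o[atTop] id := by
  refine IsLittleO.of_bound fun c hc => ?_
  have hsmall : ∀ᶠ s in atTop, ‖h' s‖ ≤ c / 2 := by
    simpa using h'0.eventually (Metric.closedBall_mem_nhds 0 (half_pos hc))
  obtain ⟨A, hA⟩ := eventually_atTop.1 (hd.and (hsmall.and (eventually_ge_atTop 0)))
  have hA0 : 0 ≤ A := (hA A le_rfl).2.2
  filter_upwards [eventually_ge_atTop A, eventually_ge_atTop (2 * ‖h A‖ / c)] with s hsA hsh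
  have hmvt : ‖h s - h A‖ ≤ c / 2 * ‖s - A‖ :=
    (convex_Ici A).norm_image_sub_le_of_norm_hasDerivWithin_le
      (fun x hx => (hA x hx).1.hasDerivWithinAt) (fun x hx => (hA x hx).2.1)
      Set.self_mem_Ici hsA
  have hhA : ‖h A‖ ≤ c / 2 * s := by
    rw [div_le_iff₀ hc] at hsh
    linarith
  rw [Real.norm_of_nonneg (sub_nonneg.2 hsA)] at hmvt
  calc ‖h s‖ ≤ ‖h s - h A‖ + ‖h A‖ := norm_le_norm_sub_add _ _
    _ ≤ c * ‖id s‖ := by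
      rw [id, Real.norm_of_nonneg (hA0.trans hsA)]
      nlinarith

theorem tendsto_div_self_of_hasDerivAt {f f' : ℝ → ℝ} {L : ℝ}
    (hd : ∀ᶠ s in atTop, HasDerivAt f (f' s) s) (hf' : Tendsto f' atTop (𝓝 L)) :
    Tendsto (fun s => f s / s) atTop (𝓝 L) := by
  have hlo : (fun s => f s - L * s) =o[atTop] id := by
    refine isLittleO_id_of_hasDerivAt_of_tendsto_zero (h' := fun s => f' s - L) ?_ ?_
    · filter_upwards [hd] with s hs
      simpa using hs.fun_sub ((hasDerivAt_id s).const_mul L)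
    · simpa using hf'.sub_const L
  have hlim := hlo.tendsto_div_nhds_zero.add_const L
  rw [zero_add] at hlim
  refine hlim.congr' ?_
  filter_upwards [eventually_ne_atTop 0] with s hs
  rw [id, sub_div, mul_div_cancel_right₀ _ hs, sub_add_cancel]

theorem tendsto_atTop_of_hasDerivAt_comp {F g : ℝ → ℝ} (hF : Continuous F) (hpos : ∀ x, 0 < F x)
    (hg : ∀ s, HasDerivAt g (F (g s)) s) : Tendsto g atTop atTop := by
  have hmono : Monotone g := (strictMono_of_hasDerivAt_pos hg fun s => hpos _).monotone
  refine tendsto_atTop_atTop_of_monotone hmono fun M => ?_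
  by_contra! hM
  have hconv := tendsto_atTop_ciSup hmono ⟨M, Set.forall_mem_range.2 fun s => (hM s).le⟩
  -- a bounded solution would still have slope tending to `F (sup g) > 0`, hence grow linearly
  have hslope : Tendsto (fun s => g s / s) atTop (𝓝 (F (⨆ s, g s))) :=
    tendsto_div_self_of_hasDerivAt (Eventually.of_forall hg) ((hF.tendsto _).comp hconv)
  have hgrow : Tendsto g atTop atTop := by
    refine (hslope.pos_mul_atTop (hpos _) tendsto_id).congr' ?_
    filter_upwards [eventually_ne_atTop 0] with s hs
    exact div_mul_cancel₀ _ hs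
  obtain ⟨s, hs⟩ := (hgrow.eventually_gt_atTop M).exists
  exact (hM s).not_gt hs

section Solution

variable {a g : ℝ → ℝ} {k a₁ : ℝ}

theorem tendsto_rpow_div_self_of_hasDerivAt_inv_sqrt
    (hg : ∀ s, HasDerivAt g (1 / √(a (g s))) s) (hgtop : Tendsto g atTop atTop)
    (hratio : Tendsto (fun s => g s ^ k / a (g s)) atTop (𝓝 a₁⁻¹)) :
    Tendsto (fun s => g s ^ ((k + 2) / 2) / s) atTop (𝓝 ((k + 2) / (2 * √a₁))) := by
  have hgpos : ∀ᶠ s in atTop, 0 < g s := hgtop.eventually_gt_atTop 0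
  refine tendsto_div_self_of_hasDerivAt
    (f' := fun s => (k + 2) / 2 * g s ^ ((k + 2) / 2 - 1) * (1 / √(a (g s)))) ?_ ?_
  · filter_upwards [hgpos] with s hs
    exact (Real.hasDerivAt_rpow_const (Or.inl hs.ne')).comp s (hg s)
  · have hval : (k + 2) / 2 * √a₁⁻¹ = (k + 2) / (2 * √a₁) := by
      rw [Real.sqrt_inv]
      field_simp
    rw [← hval]
    refine (tendsto_const_nhds.mul hratio.sqrt).congr' ?_
    filter_upwards [hgpos] with s hs
    rw [Real.sqrt_div (Real.rpow_nonneg hs.le k), Real.sqrt_eq_rpow, ← Real.rpow_mul hs.le,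
      show (k + 2) / 2 - 1 = k * (1 / 2) by ring]
    field_simp

theorem tendsto_mul_deriv_sq_div_rpow (ha : ∀ x, 0 ≤ a x) (hk : 0 < k + 2) (ha₁ : 0 < a₁)
    (hlim : Tendsto (fun s => a s / s ^ k) atTop (𝓝 a₁))
    (hg : ∀ s, HasDerivAt g (1 / √(a (g s))) s) (hgtop : Tendsto g atTop atTop) :
    Tendsto (fun s => s * deriv g s ^ 2 / g s ^ ((2 - k) / 2)) atTop
      (𝓝 (((k + 2) / (2 * √a₁))⁻¹ * a₁⁻¹)) := by
  have hratio : Tendsto (fun s => g s ^ k / a (g s)) atTop (𝓝 a₁⁻¹) := by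
    simpa only [Function.comp_def, inv_div] using (hlim.comp hgtop).inv₀ ha₁.ne'
  have hpow : Tendsto (fun s => s / g s ^ ((k + 2) / 2)) atTop (𝓝 ((k + 2) / (2 * √a₁))⁻¹) := by
    simpa only [inv_div] using
      (tendsto_rpow_div_self_of_hasDerivAt_inv_sqrt hg hgtop hratio).inv₀ (by positivity)
  refine (hpow.mul hratio).congr' ?_
  filter_upwards [hgtop.eventually_gt_atTop 0] with s hs
  have hsplit : g s ^ k * g s ^ ((2 - k) / 2) = g s ^ ((k + 2) / 2) := by
    rw [← Real.rpow_add hs]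
    ring_nf
  rw [(hg s).deriv, div_pow, Real.sq_sqrt (ha _), ← hsplit]
  have := Real.rpow_pos_of_pos hs k
  have := Real.rpow_pos_of_pos hs ((2 - k) / 2)
  field_simp

end Solution

theorem s_gprime_sq_limit_general
    (a : ℝ → ℝ) (ν : ℝ) (hν : 0 < ν)
    (ha : ContDiff ℝ 2 a) (hbound : ∀ s, ν ≤ a s)
    (k a₁ : ℝ) (hk : 0 < k) (ha₁ : 0 < a₁)
    (hlim : Tendsto (fun s : ℝ => a s / s ^ k) atTop (𝓝 a₁))
    (g : ℝ → ℝ)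
    (hg : ∀ s, HasDerivAt g (1 / Real.sqrt (a (g s))) s)
    (c₁ : ℝ) (hc₁ : c₁ = ((k + 2) / (2 * Real.sqrt a₁)) ^ (2 / (k + 2))) :
    (2 < k → Tendsto (fun s : ℝ => s * (deriv g s) ^ 2) atTop (𝓝 0)) ∧
    (k = 2 → Tendsto (fun s : ℝ => s * (deriv g s) ^ 2) atTop (𝓝 (1 / (a₁ * c₁ ^ k)))) ∧
    (k < 2 → Tendsto (fun s : ℝ => s * (deriv g s) ^ 2) atTop atTop) := by
  have hapos : ∀ x, 0 < a x := fun x => hν.trans_le (hbound x)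
  have hsqrt : ∀ x, 0 < √(a x) := fun x => Real.sqrt_pos.2 (hapos x)
  have hgtop : Tendsto g atTop atTop :=
    tendsto_atTop_of_hasDerivAt_comp
      (continuous_const.div ha.continuous.sqrt fun x => (hsqrt x).ne')
      (fun x => one_div_pos.2 (hsqrt x)) hg
  have hmain :=
    tendsto_mul_deriv_sq_div_rpow (fun x => (hapos x).le) (by linarith) ha₁ hlim hg hgtop
  have hsplit : (fun s => s * deriv g s ^ 2 / g s ^ ((2 - k) / 2) * g s ^ ((2 - k) / 2))
      =ᶠ[atTop] fun s => s * deriv g s ^ 2 := by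
    filter_upwards [hgtop.eventually_gt_atTop 0] with s hs
    exact div_mul_cancel₀ _ (Real.rpow_pos_of_pos hs _).ne'
  refine ⟨fun hk2 => ?_, fun hk2 => ?_, fun hk2 => ?_⟩
  · have hdecay : Tendsto (fun s => g s ^ ((2 - k) / 2)) atTop (𝓝 0) := by
      rw [show (2 - k) / 2 = -((k - 2) / 2) by ring]
      exact (tendsto_rpow_neg_atTop (by linarith)).comp hgtop
    simpa using (hmain.mul hdecay).congr' hsplit
  · subst hk2
    have hc₁sq : c₁ ^ (2 : ℝ) = (2 + 2) / (2 * √a₁) := by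
      rw [hc₁, ← Real.rpow_mul (by positivity)]
      norm_num
    rw [hc₁sq, one_div, mul_inv, mul_comm]
    simpa using hmain
  · exact (hmain.pos_mul_atTop (by positivity)
      ((tendsto_rpow_atTop (by linarith)).comp hgtop)).congr' hsplit

theorem s_gprime_sq_limit
    (a : ℝ → ℝ) (ν : ℝ) (hν : 0 < ν)
    (ha : ContDiff ℝ 2 a) (hbound : ∀ s, ν ≤ a s)
    (k a₁ : ℝ) (hk : 0 < k) (ha₁ : 0 < a₁)
    (hlim : Tendsto (fun s : ℝ => a s / s ^ k) atTop (𝓝 a₁))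
    (g : ℝ → ℝ)
    (hg : ∀ s, HasDerivAt g (1 / Real.sqrt (a (g s))) s) (hg0 : g 0 = 0)
    (c₁ : ℝ) (hc₁ : c₁ = ((k + 2) / (2 * Real.sqrt a₁)) ^ (2 / (k + 2))) :
    (2 < k → Tendsto (fun s : ℝ => s * (deriv g s) ^ 2) atTop (𝓝 0)) ∧
    (k = 2 → Tendsto (fun s : ℝ => s * (deriv g s) ^ 2) atTop (𝓝 (1 / (a₁ * c₁ ^ k)))) ∧
    (k < 2 → Tendsto (fun s : ℝ => s * (deriv g s) ^ 2) atTop atTop) :=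
  s_gprime_sq_limit_general a ν hν ha hbound k a₁ hk ha₁ hlim g hg c₁ hc₁
end

section
/- Let N ≥ 3, let a ∈ C²(ℝ) with a(s) ≥ ν > 0 for all s ∈ ℝ, let p > 1 and m > 0, let g be the solution of g'(s) = 1/√(a(g(s))), g(0) = 0, and let h(t) = (|g(t)|^{p−1} g(t) − m g(t))/√(a(g(t))). If v ∈ C²(ℝ^N) satisfies v > 0 in ℝ^N and −Δv(x) = h(v(x)) for all x ∈ ℝ^N, then u := g ∘ v belongs to C²(ℝ^N), u > 0 in ℝ^N, and u is a classical solution of −a(u)Δu − (1/2)a'(u)|∇u|² + m u = u^p in ℝ^N. -/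
/-!
With `u = g ∘ v` the chain rule gives `∇u = g'(v) ∇v` and `Δu = g'(v) Δv + g''(v) |∇v|²`,
where `g' = a(g)^{-1/2}` and `g'' = -a'(g) / (2 a(g)²)`. Hence
`a(u) Δu + ½ a'(u) |∇u|² = √(a(u)) Δv`: the gradient terms cancel, and the equation for `v`
turns this into `m u - u^p`. Positivity of `u` holds because `g` is strictly increasing with
`g 0 = 0`.
-/

open Filter Real Topology

/-- The Laplacian of `u : ℝ^N → ℝ`, as the sum of second partial derivatives. -/
noncomputable def lap {N : ℕ} (u : EuclideanSpace ℝ (Fin N) → ℝ)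
    (x : EuclideanSpace ℝ (Fin N)) : ℝ :=
  ∑ i : Fin N, fderiv ℝ (fun y => fderiv ℝ u y (EuclideanSpace.single i 1)) x
    (EuclideanSpace.single i 1)

section Gradient

variable {F : Type*} [NormedAddCommGroup F] [InnerProductSpace ℝ F] [CompleteSpace F]

theorem HasDerivAt.comp_hasGradientAt {g : ℝ → ℝ} {g' : ℝ} {v : F → ℝ} {v' x : F}
    (hg : HasDerivAt g g' (v x)) (hv : HasGradientAt v v' x) :
    HasGradientAt (g ∘ v) (g' • v') x := by
  rw [hasGradientAt_iff_hasFDerivAt] at hv ⊢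
  simpa using hg.comp_hasFDerivAt x hv

theorem norm_gradient_comp_sq {g : ℝ → ℝ} {g' : ℝ} {v : F → ℝ} {x : F}
    (hg : HasDerivAt g g' (v x)) (hv : DifferentiableAt ℝ v x) :
    ‖gradient (g ∘ v) x‖ ^ 2 = g' ^ 2 * ‖gradient v x‖ ^ 2 := by
  rw [(hg.comp_hasGradientAt hv.hasGradientAt).gradient, norm_smul, mul_pow, norm_eq_abs, sq_abs]

end Gradient

theorem norm_gradient_sq_eq_sum {N : ℕ} (f : EuclideanSpace ℝ (Fin N) → ℝ)
    (x : EuclideanSpace ℝ (Fin N)) :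
    ‖gradient f x‖ ^ 2 = ∑ i, (fderiv ℝ f x (EuclideanSpace.single i 1)) ^ 2 := by
  simp [EuclideanSpace.real_norm_sq_eq, ← inner_gradient_left, EuclideanSpace.inner_single_right]

section SecondDerivative

variable {E : Type*} [NormedAddCommGroup E] [NormedSpace ℝ E] {v : E → ℝ} {g g' : ℝ → ℝ}

theorem fderiv_comp_apply_of_hasDerivAt (hv : Differentiable ℝ v)
    (hg : ∀ s, HasDerivAt g (g' s) s) (y e : E) :
    fderiv ℝ (g ∘ v) y e = g' (v y) * fderiv ℝ v y e := by
  simp [((hg (v y)).comp_hasFDerivAt y (hv y).hasFDerivAt).fderiv]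

theorem fderiv_fderiv_comp_apply {g'' : ℝ} {x : E} (hv : ContDiff ℝ 2 v)
    (hg : ∀ s, HasDerivAt g (g' s) s) (hg' : HasDerivAt g' g'' (v x)) (e : E) :
    fderiv ℝ (fun y => fderiv ℝ (g ∘ v) y e) x e
      = g' (v x) * fderiv ℝ (fun y => fderiv ℝ v y e) x e + g'' * fderiv ℝ v x e ^ 2 := by
  have hv₁ : Differentiable ℝ v := hv.differentiable two_ne_zero
  have hpartial : Differentiable ℝ (fun y => fderiv ℝ v y e) :=
    ((hv.fderiv_right le_rfl).clm_apply contDiff_const).differentiable one_ne_zero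
  have hprod := (hg'.comp_hasFDerivAt x (hv₁ x).hasFDerivAt).fun_mul (hpartial x).hasFDerivAt
  simp only [Function.comp_apply] at hprod
  simp_rw [fderiv_comp_apply_of_hasDerivAt hv₁ hg _ e, hprod.fderiv]
  simp only [add_apply, smul_apply, smul_eq_mul]
  ring

end SecondDerivative

theorem lap_comp {N : ℕ} {v : EuclideanSpace ℝ (Fin N) → ℝ} {g g' : ℝ → ℝ} {g'' : ℝ}
    {x : EuclideanSpace ℝ (Fin N)} (hv : ContDiff ℝ 2 v)
    (hg : ∀ s, HasDerivAt g (g' s) s) (hg' : HasDerivAt g' g'' (v x)) :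
    lap (g ∘ v) x = g' (v x) * lap v x + g'' * ‖gradient v x‖ ^ 2 := by
  simp only [lap, fderiv_fderiv_comp_apply hv hg hg', norm_gradient_sq_eq_sum,
    Finset.sum_add_distrib, Finset.mul_sum]

section InverseSqrtFlow

variable {a g : ℝ → ℝ}

theorem strictMono_of_hasDerivAt_one_div_sqrt (ha : ∀ s, 0 < a s)
    (hg : ∀ s, HasDerivAt g (1 / √(a (g s))) s) : StrictMono g :=
  strictMono_of_hasDerivAt_pos hg fun s => by have := ha (g s); positivity

theorem hasDerivAt_one_div_sqrt_comp {s : ℝ} (ha : 0 < a (g s))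
    (ha' : DifferentiableAt ℝ a (g s)) (hg : HasDerivAt g (1 / √(a (g s))) s) :
    HasDerivAt (fun t => 1 / √(a (g t))) (-deriv a (g s) / (2 * a (g s) ^ 2)) s := by
  have hsqrt : HasDerivAt (fun t => √(a (g t))) _ s :=
    (hasDerivAt_sqrt ha.ne').comp s (ha'.hasDerivAt.comp s hg)
  refine ((hasDerivAt_const s (1 : ℝ)).fun_div hsqrt (sqrt_pos.mpr ha).ne').congr_deriv ?_
  have hr := sq_sqrt ha.le
  field_simp
  linear_combination deriv a (g s) * (√(a (g s)) ^ 2 + a (g s)) * hr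

theorem contDiff_two_of_hasDerivAt_one_div_sqrt (ha : ContDiff ℝ 1 a) (ha_pos : ∀ s, 0 < a s)
    (hg : ∀ s, HasDerivAt g (1 / √(a (g s))) s) : ContDiff ℝ 2 g := by
  have hg_diff : Differentiable ℝ g := fun s => (hg s).differentiableAt
  have hderiv : deriv g = fun s => 1 / √(a (g s)) := funext fun s => (hg s).deriv
  have hg₁ : ContDiff ℝ 1 g := by
    rw [contDiff_one_iff_deriv, hderiv]
    exact ⟨hg_diff, continuous_const.div (ha.continuous.comp hg_diff.continuous).sqrt
      fun s => (sqrt_pos.mpr (ha_pos _)).ne'⟩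
  rw [show (2 : WithTop ℕ∞) = 1 + 1 from rfl, contDiff_succ_iff_deriv, hderiv]
  exact ⟨hg_diff, by simp, contDiff_const.div ((ha.comp hg₁).sqrt fun s => (ha_pos _).ne')
    fun s => (sqrt_pos.mpr (ha_pos _)).ne'⟩

end InverseSqrtFlow

theorem dual_solution_yields_solution_general
    (N : ℕ)
    (a : ℝ → ℝ) (ν : ℝ) (hν : 0 < ν)
    (ha : ContDiff ℝ 2 a) (hbound : ∀ s, ν ≤ a s)
    (p m : ℝ)
    (g : ℝ → ℝ)
    (hg : ∀ s, HasDerivAt g (1 / Real.sqrt (a (g s))) s) (hg0 : g 0 = 0)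
    (h : ℝ → ℝ)
    (hh : ∀ t, h t = (|g t| ^ (p - 1) * g t - m * g t) / Real.sqrt (a (g t)))
    (v : EuclideanSpace ℝ (Fin N) → ℝ) (hv : ContDiff ℝ 2 v)
    (hvpos : ∀ x, 0 < v x)
    (hveq : ∀ x, -lap v x = h (v x)) :
    ContDiff ℝ 2 (g ∘ v) ∧ (∀ x, 0 < (g ∘ v) x) ∧
    (∀ x, -(a ((g ∘ v) x) * lap (g ∘ v) x)
        - (1 / 2) * deriv a ((g ∘ v) x) * ‖gradient (g ∘ v) x‖ ^ 2
        + m * (g ∘ v) x = (g ∘ v) x ^ p) := by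
  have ha_pos : ∀ s, 0 < a s := fun s => hν.trans_le (hbound s)
  have ha₁ : ContDiff ℝ 1 a := ha.of_le one_le_two
  have hu_pos : ∀ x, 0 < (g ∘ v) x := fun x =>
    hg0 ▸ strictMono_of_hasDerivAt_one_div_sqrt ha_pos hg (hvpos x)
  refine ⟨(contDiff_two_of_hasDerivAt_one_div_sqrt ha₁ ha_pos hg).comp hv, hu_pos,
    fun x => ?_⟩
  have hg' :=
    hasDerivAt_one_div_sqrt_comp (ha_pos _) (ha₁.differentiable one_ne_zero _) (hg (v x))
  rw [lap_comp hv hg hg',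
    norm_gradient_comp_sq (hg (v x)) (hv.differentiable two_ne_zero x)]
  have hu : 0 < g (v x) := hu_pos x
  simp only [Function.comp_apply]
  set u := g (v x)
  have hlap_v : lap v x = -((u ^ p - m * u) / √(a u)) := by
    rw [← neg_neg (lap v x), hveq, hh, abs_of_pos hu, rpow_sub_one hu.ne',
      div_mul_cancel₀ _ hu.ne']
  have hr_pos := sqrt_pos.mpr (ha_pos u)
  have hA : a u = √(a u) ^ 2 := (sq_sqrt (ha_pos u).le).symm
  rw [hlap_v]
  -- with `a u = r²` the identity becomes rational in `r = √(a u)`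
  generalize √(a u) = r at hA hr_pos ⊢
  rw [hA]
  field_simp
  ring

theorem dual_solution_yields_solution
    (N : ℕ) (hN : 3 ≤ N)
    (a : ℝ → ℝ) (ν : ℝ) (hν : 0 < ν)
    (ha : ContDiff ℝ 2 a) (hbound : ∀ s, ν ≤ a s)
    (p m : ℝ) (hp : 1 < p) (hm : 0 < m)
    (g : ℝ → ℝ)
    (hg : ∀ s, HasDerivAt g (1 / Real.sqrt (a (g s))) s) (hg0 : g 0 = 0)
    (h : ℝ → ℝ)
    (hh : ∀ t, h t = (|g t| ^ (p - 1) * g t - m * g t) / Real.sqrt (a (g t)))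
    (v : EuclideanSpace ℝ (Fin N) → ℝ) (hv : ContDiff ℝ 2 v)
    (hvpos : ∀ x, 0 < v x)
    (hveq : ∀ x, -lap v x = h (v x)) :
    ContDiff ℝ 2 (g ∘ v) ∧ (∀ x, 0 < (g ∘ v) x) ∧
    (∀ x, -(a ((g ∘ v) x) * lap (g ∘ v) x)
        - (1 / 2) * deriv a ((g ∘ v) x) * ‖gradient (g ∘ v) x‖ ^ 2
        + m * (g ∘ v) x = (g ∘ v) x ^ p) :=
  dual_solution_yields_solution_general N a ν hν ha hbound p m g hg hg0 h hh v hv hvpos hveq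
end

section
/- Let N ≥ 3, let a ∈ C²(ℝ) with a(s) ≥ ν > 0 for all s ∈ ℝ, let k > 0 and a₁ > 0 with lim_{s→+∞} a(s)/s^k = a₁, and let g be the solution of g'(s) = 1/√(a(g(s))), g(0) = 0. If u ∈ C²(ℝ^N) satisfies u > 0 in ℝ^N, u ∈ L²(ℝ^N), |∇u| ∈ L²(ℝ^N) and a(u)|∇u|² ∈ L¹(ℝ^N), then v := g⁻¹ ∘ u satisfies v ∈ L²(ℝ^N) and |∇v| ∈ L²(ℝ^N). -/
/-!
Write `h = g⁻¹`, so that `h' = √a`. Then `|∇(h ∘ u)|² = a(u) |∇u|²` is integrable, which is the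
gradient half. For the `L²` half, `h 0 = 0` gives `|h ∘ u| ≤ K |u|` where `|u| ≤ 1`, and
`{|u| ≥ 1}` has finite measure because `u ∈ L²`; on that set `h ∘ u` is controlled by the Sobolev
embedding `‖h ∘ u‖_{2N/(N-2)} ≤ C ‖∇(h ∘ u)‖₂`. The Gagliardo–Nirenberg–Sobolev inequality
`eLpNorm_le_eLpNorm_fderiv_of_eq_inner` is for compactly supported `C¹` functions; it extends to
`C¹` functions in `L²` through the cutoffs `φ (x / R)`, whose error term `‖f‖₂ ‖∇φ‖_∞ / R`
vanishes as `R → ∞`, and then, by Fatou's lemma, to `h ∘ u` through the bounded truncations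
`R arctan (h ∘ u / R)`, which lie in `L²` and have smaller gradient.
-/

open Filter MeasureTheory Real Topology Module
open scoped NNReal ENNReal

theorem Real.abs_arctan_le (x : ℝ) : |arctan x| ≤ |x| := by
  have key : ∀ y, 0 ≤ y → arctan y ≤ y := fun y hy =>
    (le_tan (arctan_nonneg.2 hy) (arctan_lt_pi_div_two y)).trans_eq (tan_arctan y)
  rcases le_total 0 x with hx | hx
  · rw [abs_of_nonneg hx, abs_of_nonneg (arctan_nonneg.2 hx)]
    exact key x hx
  · rw [abs_of_nonpos hx, abs_of_nonpos (arctan_le_zero.2 hx), ← arctan_neg]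
    exact key (-x) (neg_nonneg.2 hx)

noncomputable def arctanTrunc (R s : ℝ) : ℝ := R * arctan (s / R)

theorem hasDerivAt_arctanTrunc {R : ℝ} (hR : R ≠ 0) (s : ℝ) :
    HasDerivAt (arctanTrunc R) (1 + (s / R) ^ 2)⁻¹ s := by
  refine (((hasDerivAt_id' s).div_const R).arctan.const_mul R).congr_deriv ?_
  field_simp

theorem contDiff_arctanTrunc (R : ℝ) : ContDiff ℝ 1 (arctanTrunc R) :=
  contDiff_const.mul (contDiff_arctan.comp (contDiff_id.div_const R))

theorem abs_arctanTrunc_le {R : ℝ} (hR : 0 < R) (s : ℝ) : |arctanTrunc R s| ≤ |s| := by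
  rw [arctanTrunc, abs_mul, abs_of_pos hR]
  calc R * |arctan (s / R)| ≤ R * |s / R| := mul_le_mul_of_nonneg_left (abs_arctan_le _) hR.le
    _ = |s| := by rw [abs_div, abs_of_pos hR]; field_simp

theorem abs_arctanTrunc_le_mul_pi {R : ℝ} (hR : 0 ≤ R) (s : ℝ) :
    |arctanTrunc R s| ≤ R * (π / 2) := by
  rw [arctanTrunc, abs_mul, abs_of_nonneg hR]
  gcongr
  exact abs_le.2 ⟨(neg_pi_div_two_lt_arctan _).le, (arctan_lt_pi_div_two _).le⟩

theorem tendsto_arctanTrunc_atTop (s : ℝ) :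
    Tendsto (fun R => arctanTrunc R s) atTop (𝓝 s) := by
  rcases eq_or_ne s 0 with rfl | hs
  · simp [arctanTrunc]
  have hslope : Tendsto (fun t : ℝ => t⁻¹ * arctan t) (𝓝[≠] 0) (𝓝 1) := by
    simpa using (hasDerivAt_arctan 0).tendsto_slope_zero
  have hsR : Tendsto (fun R : ℝ => s / R) atTop (𝓝[≠] 0) :=
    tendsto_nhdsWithin_iff.2 ⟨tendsto_const_nhds.div_atTop tendsto_id,
      (eventually_gt_atTop 0).mono fun R hR => div_ne_zero hs hR.ne'⟩
  have := (hslope.comp hsR).const_mul s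
  rw [mul_one] at this
  refine this.congr' ((eventually_gt_atTop 0).mono fun R hR => ?_)
  simp only [Function.comp_apply, arctanTrunc]
  field_simp

theorem exists_norm_le_mul_norm_of_contDiff {h : ℝ → ℝ} (hh : ContDiff ℝ 1 h) (hh0 : h 0 = 0) :
    ∃ K : ℝ, ∀ s, ‖s‖ ≤ 1 → ‖h s‖ ≤ ‖K * s‖ := by
  obtain ⟨K, hK⟩ := hh.contDiffOn.exists_lipschitzOnWith one_ne_zero (convex_Icc (-1 : ℝ) 1)
    isCompact_Icc
  refine ⟨K, fun s hs => ?_⟩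
  rw [norm_mul, NNReal.norm_eq]
  simpa [hh0] using hK.dist_le_mul s (abs_le.1 hs) 0 ⟨by norm_num, zero_le_one⟩

theorem exists_sobolevExponent {n : ℝ} (hn : 2 < n) :
    ∃ q : ℝ≥0, 2 ≤ q ∧ (q : ℝ)⁻¹ = ((2 : ℝ≥0) : ℝ)⁻¹ - n⁻¹ := by
  have hpos : 0 < (2 : ℝ)⁻¹ - n⁻¹ := sub_pos.2 (inv_strictAnti₀ two_pos hn)
  refine ⟨((2 : ℝ)⁻¹ - n⁻¹)⁻¹.toNNReal, ?_, ?_⟩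
  · rw [← NNReal.coe_le_coe, Real.coe_toNNReal _ (inv_nonneg.2 hpos.le), NNReal.coe_ofNat]
    exact (le_inv_comm₀ two_pos hpos).2 (sub_le_self _ (inv_nonneg.2 (by linarith)))
  · rw [Real.coe_toNNReal _ (inv_nonneg.2 hpos.le), inv_inv, NNReal.coe_ofNat]

section FDeriv

variable {E F : Type*} [NormedAddCommGroup E] [NormedSpace ℝ E] [NormedAddCommGroup F]
  [NormedSpace ℝ F]

theorem norm_fderiv_smul_le {c : E → ℝ} {f : E → F} {x : E} (hc : DifferentiableAt ℝ c x)
    (hf : DifferentiableAt ℝ f x) :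
    ‖fderiv ℝ (fun y => c y • f y) x‖ ≤ ‖c x‖ * ‖fderiv ℝ f x‖ + ‖fderiv ℝ c x‖ * ‖f x‖ := by
  rw [fderiv_fun_smul hc hf]
  refine (norm_add_le _ _).trans ?_
  rw [norm_smul, ContinuousLinearMap.norm_smulRight_apply]

theorem norm_fderiv_arctanTrunc_comp_le {R : ℝ} (hR : R ≠ 0) {f : E → ℝ} {x : E}
    (hf : DifferentiableAt ℝ f x) :
    ‖fderiv ℝ (fun y => arctanTrunc R (f y)) x‖ ≤ ‖fderiv ℝ f x‖ := by
  have hD : HasFDerivAt (fun y => arctanTrunc R (f y)) ((1 + (f x / R) ^ 2)⁻¹ • fderiv ℝ f x) x :=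
    (hasDerivAt_arctanTrunc hR (f x)).comp_hasFDerivAt x hf.hasFDerivAt
  rw [hD.fderiv, norm_smul, Real.norm_of_nonneg (by positivity)]
  exact mul_le_of_le_one_left (norm_nonneg _)
    (inv_le_one_of_one_le₀ (le_add_of_nonneg_right (sq_nonneg _)))

end FDeriv

section Lp

variable {α F : Type*} [MeasurableSpace α] {μ : Measure α} [NormedAddCommGroup F]

theorem eLpNorm_le_of_tendsto {p : ℝ≥0∞} {f : ℕ → α → F} {g : α → F}
    (hf : ∀ n, AEStronglyMeasurable (f n) μ)
    (hfg : ∀ᵐ x ∂μ, Tendsto (fun n => f n x) atTop (𝓝 (g x)))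
    {c : ℕ → ℝ≥0∞} {C : ℝ≥0∞} (hc : Tendsto c atTop (𝓝 C)) (hfc : ∀ n, eLpNorm (f n) p μ ≤ c n) :
    eLpNorm g p μ ≤ C :=
  (Lp.eLpNorm_lim_le_liminf_eLpNorm hf g hfg).trans <|
    (liminf_le_liminf (Eventually.of_forall hfc)).trans_eq hc.liminf_eq

theorem memLp_of_memLp_indicator_of_norm_le {p q : ℝ≥0∞} {S : Set α} {f g : α → F}
    (hS : MeasurableSet S) (hμS : μ S ≠ ∞) (hpq : p ≤ q) (hfS : MemLp (S.indicator f) q μ)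
    (hg : MemLp g p μ) (hf : AEStronglyMeasurable f μ) (hfg : ∀ x ∉ S, ‖f x‖ ≤ ‖g x‖) :
    MemLp f p μ := by
  rw [← S.indicator_self_add_compl f]
  refine (hfS.mono_exponent_of_measure_support_ne_top
    (fun x hx => Set.indicator_of_notMem hx f) hμS hpq).add ?_
  refine hg.of_le (hf.indicator hS.compl) (ae_of_all _ fun x => ?_)
  by_cases hx : x ∈ S
  · simp [hx]
  · rw [Set.indicator_of_mem (Set.mem_compl hx)]
    exact hfg x hx

end Lp

section Cutoff

variable {E : Type*} [NormedAddCommGroup E] [NormedSpace ℝ E] [FiniteDimensional ℝ E]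

variable (E) in
noncomputable def unitBump : ContDiffBump (0 : E) := ⟨1, 2, one_pos, one_lt_two⟩

noncomputable def cutoff (R : ℝ) (x : E) : ℝ := unitBump E (R⁻¹ • x)

theorem contDiff_cutoff (R : ℝ) : ContDiff ℝ 1 (cutoff (E := E) R) :=
  (unitBump E).contDiff.comp (contDiff_const_smul _)

theorem hasCompactSupport_cutoff {R : ℝ} (hR : R ≠ 0) : HasCompactSupport (cutoff (E := E) R) :=
  (unitBump E).hasCompactSupport.comp_smul (inv_ne_zero hR)

theorem cutoff_nonneg (R : ℝ) (x : E) : 0 ≤ cutoff R x := (unitBump E).nonneg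

theorem cutoff_le_one (R : ℝ) (x : E) : cutoff R x ≤ 1 := (unitBump E).le_one

theorem cutoff_eq_one {R : ℝ} {x : E} (hR : 0 < R) (hx : ‖x‖ ≤ R) : cutoff R x = 1 := by
  refine (unitBump E).one_of_mem_closedBall ?_
  rw [mem_closedBall_zero_iff, norm_smul, norm_inv, Real.norm_of_nonneg hR.le]
  exact inv_mul_le_one_of_le₀ hx hR.le

theorem tendsto_cutoff_atTop (x : E) : Tendsto (fun R => cutoff R x) atTop (𝓝 1) :=
  tendsto_const_nhds.congr' <| (eventually_ge_atTop (max ‖x‖ 1)).mono fun _ hR =>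
    (cutoff_eq_one (one_pos.trans_le ((le_max_right _ _).trans hR))
      ((le_max_left _ _).trans hR)).symm

theorem exists_norm_fderiv_cutoff_le :
    ∃ B : ℝ≥0, ∀ R > 0, ∀ x : E, ‖fderiv ℝ (cutoff R) x‖ ≤ B / R := by
  obtain ⟨B, hB⟩ := (unitBump E).contDiff.lipschitzWith_of_hasCompactSupport
    (unitBump E).hasCompactSupport one_ne_zero
  refine ⟨B, fun R hR x => ?_⟩
  have hlip := hB.comp (lipschitzWith_smul (α := ℝ) (β := E) R⁻¹)
  refine (norm_fderiv_le_of_lipschitz ℝ hlip).trans_eq ?_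
  rw [NNReal.coe_mul, coe_nnnorm, norm_inv, Real.norm_of_nonneg hR.le, div_eq_mul_inv]

end Cutoff

section Sobolev

variable {E : Type*} [NormedAddCommGroup E] [NormedSpace ℝ E] [FiniteDimensional ℝ E]
  [MeasurableSpace E] [BorelSpace E] {μ : Measure E} [μ.IsAddHaarMeasure]

theorem eLpNorm_le_eLpNorm_fderiv_of_memLp {F : Type*} [NormedAddCommGroup F]
    [InnerProductSpace ℝ F] {f : E → F} (hf : ContDiff ℝ 1 f)
    {p p' : ℝ≥0} (hfp : MemLp f p μ) (hp : 1 ≤ p) (hn : 0 < finrank ℝ E)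
    (hp' : (p' : ℝ)⁻¹ = p⁻¹ - (finrank ℝ E : ℝ)⁻¹) :
    eLpNorm f p' μ ≤ eLpNormLESNormFDerivOfEqInnerConst μ p * eLpNorm (fderiv ℝ f) p μ := by
  obtain ⟨B, hB⟩ := exists_norm_fderiv_cutoff_le (E := E)
  set C := eLpNormLESNormFDerivOfEqInnerConst μ p
  set r : ℕ → ℝ := fun n => B / ((n : ℝ) + 1)
  have hr : Tendsto r atTop (𝓝 0) :=
    tendsto_const_nhds.div_atTop (tendsto_atTop_add_const_right _ _ tendsto_natCast_atTop_atTop)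
  have hcut : ∀ n : ℕ, eLpNorm (fun x => cutoff ((n : ℝ) + 1) x • f x) p' μ
      ≤ C * (eLpNorm (fderiv ℝ f) p μ + ‖r n‖ₑ * eLpNorm f p μ) := by
    intro n
    have hR : (0 : ℝ) < (n : ℝ) + 1 := by positivity
    have hD : ∀ x, ‖fderiv ℝ (fun y => cutoff ((n : ℝ) + 1) y • f y) x‖
        ≤ ‖fderiv ℝ f x‖ + r n * ‖f x‖ := fun x => by
      refine (norm_fderiv_smul_le ((contDiff_cutoff _).differentiable one_ne_zero x)
        (hf.differentiable one_ne_zero x)).trans (add_le_add ?_ ?_)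
      · rw [Real.norm_of_nonneg (cutoff_nonneg _ x)]
        exact mul_le_of_le_one_left (norm_nonneg _) (cutoff_le_one _ x)
      · exact mul_le_mul_of_nonneg_right (hB _ hR x) (norm_nonneg _)
    refine (eLpNorm_le_eLpNorm_fderiv_of_eq_inner μ ((contDiff_cutoff _).smul hf)
      (hasCompactSupport_cutoff hR.ne').smul_right hp hn hp').trans ?_
    gcongr
    refine (eLpNorm_mono_real hD).trans ?_
    refine (eLpNorm_add_le (hf.continuous_fderiv one_ne_zero).norm.aestronglyMeasurable
      (hfp.aestronglyMeasurable.norm.const_mul _) (by exact_mod_cast hp)).trans ?_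
    rw [eLpNorm_norm]
    gcongr
    exact ((eLpNorm_const_smul (r n) (fun x => ‖f x‖) _ _).trans (by rw [eLpNorm_norm])).le
  refine eLpNorm_le_of_tendsto
    (fun n => ((contDiff_cutoff _).continuous.smul hf.continuous).aestronglyMeasurable)
    (ae_of_all _ fun x => ?_) ?_ hcut
  · simpa using ((tendsto_cutoff_atTop x).comp
      (tendsto_atTop_add_const_right _ _ tendsto_natCast_atTop_atTop)).smul_const (f x)
  · have hre : Tendsto (fun n => ‖r n‖ₑ) atTop (𝓝 0) := by
      have := (continuous_enorm.tendsto (0 : ℝ)).comp hr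
      rwa [enorm_zero] at this
    simpa using ENNReal.Tendsto.const_mul
      (tendsto_const_nhds.add (ENNReal.Tendsto.mul_const hre (Or.inr hfp.eLpNorm_ne_top)))
      (Or.inr ENNReal.coe_ne_top)

theorem eLpNorm_le_eLpNorm_fderiv_of_memLp_arctanTrunc {f : E → ℝ} (hf : ContDiff ℝ 1 f)
    {p p' : ℝ≥0} (hfp : ∀ n : ℕ, MemLp (fun x => arctanTrunc ((n : ℝ) + 1) (f x)) p μ)
    (hp : 1 ≤ p) (hn : 0 < finrank ℝ E) (hp' : (p' : ℝ)⁻¹ = p⁻¹ - (finrank ℝ E : ℝ)⁻¹) :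
    eLpNorm f p' μ ≤ eLpNormLESNormFDerivOfEqInnerConst μ p * eLpNorm (fderiv ℝ f) p μ := by
  refine eLpNorm_le_of_tendsto (f := fun n x => arctanTrunc ((n : ℝ) + 1) (f x))
    (fun n => ((contDiff_arctanTrunc _).continuous.comp hf.continuous).aestronglyMeasurable)
    (ae_of_all _ fun x => (tendsto_arctanTrunc_atTop (f x)).comp
      (tendsto_atTop_add_const_right _ _ tendsto_natCast_atTop_atTop))
    tendsto_const_nhds fun n => ?_
  refine (eLpNorm_le_eLpNorm_fderiv_of_memLp ((contDiff_arctanTrunc _).comp hf) (hfp n) hp hn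
    hp').trans ?_
  gcongr 1
  exact eLpNorm_mono fun x =>
    norm_fderiv_arctanTrunc_comp_le (by positivity) (hf.differentiable one_ne_zero x)

theorem memLp_two_comp_of_eLpNorm_fderiv_ne_top {h : ℝ → ℝ} (hh : ContDiff ℝ 1 h) (hh0 : h 0 = 0)
    {u : E → ℝ} (hu : ContDiff ℝ 1 u) (hu2 : MemLp u 2 μ) (hn : 2 < finrank ℝ E)
    (hDv : eLpNorm (fderiv ℝ (h ∘ u)) 2 μ ≠ ∞) : MemLp (h ∘ u) 2 μ := by
  obtain ⟨K, hK⟩ := exists_norm_le_mul_norm_of_contDiff hh hh0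
  set S := {x | (1 : ℝ≥0) ≤ ‖u x‖₊}
  have hSm : MeasurableSet S := measurableSet_le measurable_const hu.continuous.nnnorm.measurable
  have hμS : μ S ≠ ∞ := (hu2.meas_ge_lt_top two_ne_zero ENNReal.ofNat_ne_top one_ne_zero).ne
  have hoff : ∀ x ∉ S, ‖h (u x)‖ ≤ ‖K * u x‖ := fun x hx => hK _ (mod_cast (not_le.1 hx).le)
  have hv : ContDiff ℝ 1 (h ∘ u) := hh.comp hu
  have htr : ∀ n : ℕ, MemLp (fun x => arctanTrunc ((n : ℝ) + 1) (h (u x))) (2 : ℝ≥0) μ := by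
    intro n
    have hmeas := ((contDiff_arctanTrunc ((n : ℝ) + 1)).continuous.comp
      hv.continuous).aestronglyMeasurable (μ := μ)
    refine memLp_of_memLp_indicator_of_norm_le hSm hμS le_top
      (memLp_top_of_bound (hmeas.indicator hSm) _ (ae_of_all _ fun x =>
        (norm_indicator_le_norm_self _ _).trans (abs_arctanTrunc_le_mul_pi (by positivity) _)))
      (by simpa using hu2.const_mul K) hmeas fun x hx => ?_
    exact (abs_arctanTrunc_le (by positivity) _).trans (hoff x hx)
  obtain ⟨q, hq2, hq⟩ := exists_sobolevExponent (n := finrank ℝ E) (by exact_mod_cast hn)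
  have hvq : MemLp (h ∘ u) q μ :=
    ⟨hv.continuous.aestronglyMeasurable, (eLpNorm_le_eLpNorm_fderiv_of_memLp_arctanTrunc hv htr
      one_le_two (by omega) hq).trans_lt (ENNReal.mul_lt_top ENNReal.coe_lt_top
      (by simpa using hDv.lt_top))⟩
  exact memLp_of_memLp_indicator_of_norm_le hSm hμS (by exact_mod_cast hq2) (hvq.indicator hSm)
    (hu2.const_mul K) hv.continuous.aestronglyMeasurable hoff

end Sobolev

theorem contDiff_one_of_hasDerivAt {h h' : ℝ → ℝ} (hh : ∀ y, HasDerivAt h (h' y) y)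
    (hh' : Continuous h') : ContDiff ℝ 1 h :=
  contDiff_one_iff_deriv.2 ⟨fun y => (hh y).differentiableAt,
    hh'.congr fun y => (hh y).deriv.symm⟩

theorem hasDerivAt_invFun_of_pos {g g' : ℝ → ℝ} (hg : ∀ s, HasDerivAt g (g' s) s)
    (hg' : ∀ s, 0 < g' s) (hsurj : Function.Surjective g) (y : ℝ) :
    HasDerivAt (Function.invFun g) (g' (Function.invFun g y))⁻¹ y := by
  have hmono : StrictMono g := strictMono_of_hasDerivAt_pos hg hg'
  have hright : Function.RightInverse (Function.invFun g) g := Function.rightInverse_invFun hsurj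
  have hcont : Continuous (Function.invFun g) :=
    Monotone.continuous_of_surjective
      (fun y₁ y₂ h => hmono.le_iff_le.1 (by rwa [hright y₁, hright y₂]))
      (Function.leftInverse_invFun hmono.injective).surjective
  exact .of_local_left_inverse hcont.continuousAt (hg _) (hg' _).ne' (.of_forall hright)

theorem hasDerivAt_invFun_of_hasDerivAt_one_div_sqrt {a g : ℝ → ℝ} (ha : ∀ s, 0 < a s)
    (hg : ∀ s, HasDerivAt g (1 / √(a (g s))) s) (hsurj : Function.Surjective g) (y : ℝ) :
    HasDerivAt (Function.invFun g) (√(a y)) y := by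
  simpa [Function.rightInverse_invFun hsurj y] using
    hasDerivAt_invFun_of_pos hg (fun s => one_div_pos.2 (sqrt_pos.2 (ha _))) hsurj y

section Gradient

variable {F : Type*} [NormedAddCommGroup F] [InnerProductSpace ℝ F] [CompleteSpace F]

theorem norm_gradient (f : F → ℝ) (x : F) : ‖gradient f x‖ = ‖fderiv ℝ f x‖ := by
  rw [← toDual_gradient, LinearIsometryEquiv.norm_map]

theorem HasDerivAt.gradient_comp {h : ℝ → ℝ} {h' : ℝ} {f : F → ℝ} {x : F}
    (hh : HasDerivAt h h' (f x)) (hf : DifferentiableAt ℝ f x) :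
    gradient (h ∘ f) x = h' • gradient f x := by
  refine (hasGradientAt_iff_hasFDerivAt.2 ?_).gradient
  rw [map_smul, toDual_gradient]
  exact hh.comp_hasFDerivAt x hf.hasFDerivAt

theorem memLp_norm_gradient_comp [MeasurableSpace F] [BorelSpace F] {μ : Measure F}
    {a h : ℝ → ℝ} (ha : ∀ s, 0 ≤ a s) (hh : ∀ s, HasDerivAt h (√(a s)) s)
    {u : F → ℝ} (hu : Differentiable ℝ u) (hv : ContDiff ℝ 1 (h ∘ u))
    (hX : Integrable (fun x => a (u x) * ‖gradient u x‖ ^ 2) μ) :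
    MemLp (fun x => ‖gradient (h ∘ u) x‖) 2 μ := by
  have hsq : ∀ x, ‖gradient (h ∘ u) x‖ ^ 2 = a (u x) * ‖gradient u x‖ ^ 2 := fun x => by
    rw [(hh (u x)).gradient_comp (hu x), norm_smul, mul_pow, norm_of_nonneg (sqrt_nonneg _),
      sq_sqrt (ha _)]
  exact (memLp_two_iff_integrable_sq (by simpa only [norm_gradient] using
    (hv.continuous_fderiv one_ne_zero).norm.aestronglyMeasurable)).2 (by simpa only [hsq])

end Gradient

theorem dual_function_in_H1_general
    (N : ℕ) (hN : 3 ≤ N)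
    (a : ℝ → ℝ) (ν : ℝ) (hν : 0 < ν)
    (ha : ContDiff ℝ 2 a) (hbound : ∀ s, ν ≤ a s)
    (g : ℝ → ℝ)
    (hg : ∀ s, HasDerivAt g (1 / Real.sqrt (a (g s))) s) (hg0 : g 0 = 0)
    (hbij : Function.Bijective g)
    (u : EuclideanSpace ℝ (Fin N) → ℝ) (hu : ContDiff ℝ 2 u)
    (huL2 : MemLp u 2 volume)
    (huX : Integrable (fun x => a (u x) * ‖gradient u x‖ ^ 2) volume) :
    MemLp (Function.invFun g ∘ u) 2 volume ∧
    MemLp (fun x => ‖gradient (Function.invFun g ∘ u) x‖) 2 volume := by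
  have hapos : ∀ s, 0 < a s := fun s => hν.trans_le (hbound s)
  have hh := hasDerivAt_invFun_of_hasDerivAt_one_div_sqrt hapos hg hbij.surjective
  have hh1 : ContDiff ℝ 1 (Function.invFun g) :=
    contDiff_one_of_hasDerivAt hh (continuous_sqrt.comp ha.continuous)
  have hh0 : Function.invFun g 0 = 0 := by
    simpa [hg0] using Function.leftInverse_invFun hbij.injective 0
  have hu1 : ContDiff ℝ 1 u := hu.of_le one_le_two
  have hgrad := memLp_norm_gradient_comp (fun s => (hapos s).le) hh
    (hu1.differentiable one_ne_zero) (hh1.comp hu1) huX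
  refine ⟨memLp_two_comp_of_eLpNorm_fderiv_ne_top hh1 hh0 hu1 huL2
    (by rw [finrank_euclideanSpace_fin]; omega) ?_, hgrad⟩
  simpa only [norm_gradient, eLpNorm_norm] using hgrad.eLpNorm_ne_top

theorem dual_function_in_H1
    (N : ℕ) (hN : 3 ≤ N)
    (a : ℝ → ℝ) (ν : ℝ) (hν : 0 < ν)
    (ha : ContDiff ℝ 2 a) (hbound : ∀ s, ν ≤ a s)
    (k a₁ : ℝ) (hk : 0 < k) (ha₁ : 0 < a₁)
    (hlim : Tendsto (fun s : ℝ => a s / s ^ k) atTop (𝓝 a₁))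
    (g : ℝ → ℝ)
    (hg : ∀ s, HasDerivAt g (1 / Real.sqrt (a (g s))) s) (hg0 : g 0 = 0)
    (hbij : Function.Bijective g)
    (u : EuclideanSpace ℝ (Fin N) → ℝ) (hu : ContDiff ℝ 2 u)
    (hupos : ∀ x, 0 < u x)
    (huL2 : MemLp u 2 volume)
    (hugrad : MemLp (fun x => ‖gradient u x‖) 2 volume)
    (huX : Integrable (fun x => a (u x) * ‖gradient u x‖ ^ 2) volume) :
    MemLp (Function.invFun g ∘ u) 2 volume ∧
    MemLp (fun x => ‖gradient (Function.invFun g ∘ u) x‖) 2 volume :=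
  dual_function_in_H1_general N hN a ν hν ha hbound g hg hg0 hbij u hu huL2 huX
end

section
/- Let a ∈ C²(ℝ) with a(s) ≥ ν > 0 for all s ∈ ℝ, let p > 1 and m > 0, and let g be the solution of g'(s) = 1/√(a(g(s))), g(0) = 0. For s > 0 define h(s) = g(s) g'(s) (g(s)^{p−1} − m) and K(s) = (h'(s) + s h''(s)) h(s) − s (h'(s))². Then for every s > 0, K(s) = (g'(s))³ [ (g(s)^{p−1} − m)² 𝓗₁(s) + m(p−1)(g(s)^{p−1} − m) 𝓗₂(s) − m² s (p−1)² g'(s) ], where 𝓗₁(s) = −(1/2) a''(g(s)) s g(s)² (g'(s))³ + (3/4)(a'(g(s)))² s g(s)² (g'(s))⁵ − (1/2) a'(g(s)) g(s) (g'(s))² (p s g'(s) + g(s)) − p s g'(s) + p g(s) and 𝓗₂(s) = −(1/2) a'(g(s)) s g(s) (g'(s))³ + g(s) − p s g'(s). -/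
/-!
Differentiating `g' ^ (-2) = a ∘ g` gives `g'' = -(1/2) a'(g) g'⁴`, and `(g ^ (p-1))' = (p-1) g ^ (p-1) g' / g`
for `g > 0`. Hence `h'` and `h''` are explicit expressions in `g, g', a'(g), a''(g)` and `g ^ (p-1)`,
and the decomposition of `K` becomes an identity of rational functions in these quantities.
-/

open Filter Real Topology

lemma HasDerivAt.one_div_sqrt {f : ℝ → ℝ} {f' x : ℝ} (hf : HasDerivAt f f' x) (hx : 0 < f x) :
    HasDerivAt (fun y => 1 / √(f y)) (-(1 / 2) * f' * (1 / √(f x)) ^ 3) x := by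
  have hsqrt : √(f x) ≠ 0 := (sqrt_pos.2 hx).ne'
  refine ((hasDerivAt_const x 1).div (hf.sqrt hx.ne') hsqrt).congr_deriv ?_
  field_simp
  rw [sq_sqrt hx.le]
  ring

section SpeedODE

variable {a g : ℝ → ℝ}

lemma deriv_eq_of_speed (hg : ∀ s, HasDerivAt g (1 / √(a (g s))) s) :
    deriv g = fun s => 1 / √(a (g s)) :=
  funext fun s => (hg s).deriv

lemma pos_of_speed {ν : ℝ} (hν : 0 < ν) (hbound : ∀ s, ν ≤ a s)
    (hg : ∀ s, HasDerivAt g (1 / √(a (g s))) s) (hg0 : g 0 = 0) {s : ℝ} (hs : 0 < s) :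
    0 < g s := by
  have hmono : StrictMono g := strictMono_of_deriv_pos fun x => by
    rw [deriv_eq_of_speed hg]
    exact one_div_pos.2 (sqrt_pos.2 (hν.trans_le (hbound _)))
  simpa [hg0] using hmono hs

lemma hasDerivAt_deriv_of_speed (ha : Differentiable ℝ a) (hapos : ∀ y, 0 < a y)
    (hg : ∀ s, HasDerivAt g (1 / √(a (g s))) s) (x : ℝ) :
    HasDerivAt (deriv g) (-(1 / 2) * deriv a (g x) * deriv g x ^ 4) x := by
  rw [deriv_eq_of_speed hg]
  refine (((ha (g x)).hasDerivAt.comp x (hg x)).one_div_sqrt (hapos (g x))).congr_deriv ?_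
  simp only [Function.comp_apply]
  ring

end SpeedODE

section Derivatives

variable {G D A₁ A₂ : ℝ → ℝ} {p m x : ℝ}

lemma hasDerivAt_h (hG : HasDerivAt G (D x) x)
    (hD : HasDerivAt D (-(1 / 2) * A₁ (G x) * D x ^ 4) x) (hx : G x ≠ 0) :
    HasDerivAt (fun y => G y * D y * (G y ^ (p - 1) - m))
      (D x ^ 2 * (G x ^ (p - 1) - m) - 1 / 2 * G x * A₁ (G x) * D x ^ 4 * (G x ^ (p - 1) - m)
        + (p - 1) * G x ^ (p - 1) * D x ^ 2) x := by
  refine ((hG.mul hD).mul ((hG.rpow_const (p := p - 1) (Or.inl hx)).sub_const m)).congr_deriv ?_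
  simp only [Pi.mul_apply]
  rw [rpow_sub_one hx (p - 1)]
  field_simp
  ring

lemma hasDerivAt_deriv_h (hG : HasDerivAt G (D x) x)
    (hD : HasDerivAt D (-(1 / 2) * A₁ (G x) * D x ^ 4) x)
    (hA₁ : HasDerivAt A₁ (A₂ (G x)) (G x)) (hx : G x ≠ 0) :
    HasDerivAt (fun y => D y ^ 2 * (G y ^ (p - 1) - m)
        - 1 / 2 * G y * A₁ (G y) * D y ^ 4 * (G y ^ (p - 1) - m)
        + (p - 1) * G y ^ (p - 1) * D y ^ 2)
      ((G x ^ (p - 1) - m) * D x ^ 4 *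
          (G x * A₁ (G x) ^ 2 * D x ^ 3 - 3 / 2 * A₁ (G x) * D x - 1 / 2 * G x * A₂ (G x) * D x)
        + p * (p - 1) * G x ^ (p - 1) * D x ^ 3 / G x
        - 3 / 2 * (p - 1) * A₁ (G x) * G x ^ (p - 1) * D x ^ 5) x := by
  have hT := hG.rpow_const (p := p - 1) (Or.inl hx)
  have hB := hA₁.comp x hG
  refine ((((hD.pow 2).mul (hT.sub_const m)).sub
    ((((hG.const_mul (1 / 2)).mul hB).mul (hD.pow 4)).mul (hT.sub_const m))).add
    ((hT.const_mul (p - 1)).mul (hD.pow 2))).congr_deriv ?_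
  simp only [Pi.mul_apply, Pi.pow_apply, Function.comp_apply]
  rw [rpow_sub_one hx (p - 1)]
  field_simp
  ring

end Derivatives

lemma K_identity {G D A₁ A₂ T p m s : ℝ} (hG : G ≠ 0) :
    ((D ^ 2 * (T - m) - 1 / 2 * G * A₁ * D ^ 4 * (T - m) + (p - 1) * T * D ^ 2)
      + s * ((T - m) * D ^ 4 * (G * A₁ ^ 2 * D ^ 3 - 3 / 2 * A₁ * D - 1 / 2 * G * A₂ * D)
        + p * (p - 1) * T * D ^ 3 / G - 3 / 2 * (p - 1) * A₁ * T * D ^ 5)) * (G * D * (T - m))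
      - s * (D ^ 2 * (T - m) - 1 / 2 * G * A₁ * D ^ 4 * (T - m) + (p - 1) * T * D ^ 2) ^ 2
    = D ^ 3 *
        ((T - m) ^ 2 * (-(1 / 2) * A₂ * s * G ^ 2 * D ^ 3
          + (3 / 4) * A₁ ^ 2 * s * G ^ 2 * D ^ 5
          - (1 / 2) * A₁ * G * D ^ 2 * (p * s * D + G)
          - p * s * D + p * G)
          + m * (p - 1) * (T - m) * (-(1 / 2) * A₁ * s * G * D ^ 3 + G - p * s * D)
          - m ^ 2 * s * (p - 1) ^ 2 * D) := by
  field_simp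
  ring

lemma K_eq_of_hasDerivAt {G D A₁ A₂ h : ℝ → ℝ} {p m s : ℝ}
    (hG : ∀ x, HasDerivAt G (D x) x) (hD : ∀ x, HasDerivAt D (-(1 / 2) * A₁ (G x) * D x ^ 4) x)
    (hA₁ : ∀ y, HasDerivAt A₁ (A₂ y) y) (hGne : ∀ x > 0, G x ≠ 0)
    (hh : ∀ x > 0, h x = G x * D x * (G x ^ (p - 1) - m)) (hs : 0 < s) :
    (deriv h s + s * deriv (deriv h) s) * h s - s * deriv h s ^ 2 = D s ^ 3 *
      ((G s ^ (p - 1) - m) ^ 2 * (-(1 / 2) * A₂ (G s) * s * G s ^ 2 * D s ^ 3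
          + (3 / 4) * A₁ (G s) ^ 2 * s * G s ^ 2 * D s ^ 5
          - (1 / 2) * A₁ (G s) * G s * D s ^ 2 * (p * s * D s + G s)
          - p * s * D s + p * G s)
        + m * (p - 1) * (G s ^ (p - 1) - m) * (-(1 / 2) * A₁ (G s) * s * G s * D s ^ 3
          + G s - p * s * D s)
        - m ^ 2 * s * (p - 1) ^ 2 * D s) := by
  have hderiv : ∀ x > 0, HasDerivAt h (D x ^ 2 * (G x ^ (p - 1) - m)
      - 1 / 2 * G x * A₁ (G x) * D x ^ 4 * (G x ^ (p - 1) - m)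
      + (p - 1) * G x ^ (p - 1) * D x ^ 2) x := fun x hx =>
    (hasDerivAt_h (hG x) (hD x) (hGne x hx)).congr_of_eventuallyEq <|
      eventually_of_mem (Ioi_mem_nhds hx) hh
  have hderiv_eq : deriv h =ᶠ[𝓝 s] _ :=
    eventually_of_mem (Ioi_mem_nhds hs) fun x hx => (hderiv x hx).deriv
  rw [hh s hs, (hderiv s hs).deriv, hderiv_eq.deriv_eq,
    (hasDerivAt_deriv_h (hG s) (hD s) (hA₁ (G s)) (hGne s hs)).deriv]
  exact K_identity (hGne s hs)

theorem K_decomposition_general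
    (a : ℝ → ℝ) (ν : ℝ) (hν : 0 < ν)
    (ha : ContDiff ℝ 2 a) (hbound : ∀ s, ν ≤ a s)
    (p m : ℝ)
    (g : ℝ → ℝ)
    (hg : ∀ s, HasDerivAt g (1 / Real.sqrt (a (g s))) s) (hg0 : g 0 = 0)
    (h K H₁ H₂ : ℝ → ℝ)
    (hh : ∀ s > (0 : ℝ), h s = g s * deriv g s * (g s ^ (p - 1) - m))
    (hK : ∀ s > (0 : ℝ),
      K s = (deriv h s + s * deriv (deriv h) s) * h s - s * (deriv h s) ^ 2)
    (hH₁ : ∀ s > (0 : ℝ),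
      H₁ s = -(1 / 2) * deriv (deriv a) (g s) * s * (g s) ^ 2 * (deriv g s) ^ 3
        + (3 / 4) * (deriv a (g s)) ^ 2 * s * (g s) ^ 2 * (deriv g s) ^ 5
        - (1 / 2) * deriv a (g s) * g s * (deriv g s) ^ 2 * (p * s * deriv g s + g s)
        - p * s * deriv g s + p * g s)
    (hH₂ : ∀ s > (0 : ℝ),
      H₂ s = -(1 / 2) * deriv a (g s) * s * g s * (deriv g s) ^ 3
        + g s - p * s * deriv g s) :
    ∀ s > (0 : ℝ),
      K s = (deriv g s) ^ 3 *
        ((g s ^ (p - 1) - m) ^ 2 * H₁ s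
          + m * (p - 1) * (g s ^ (p - 1) - m) * H₂ s
          - m ^ 2 * s * (p - 1) ^ 2 * deriv g s) := by
  intro s hs
  have hapos : ∀ y, 0 < a y := fun y => hν.trans_le (hbound y)
  rw [hK s hs, hH₁ s hs, hH₂ s hs]
  exact K_eq_of_hasDerivAt (fun x => (hg x).differentiableAt.hasDerivAt)
    (hasDerivAt_deriv_of_speed (ha.differentiable two_ne_zero) hapos hg)
    (fun y => (ha.differentiable_deriv_two y).hasDerivAt)
    (fun x hx => (pos_of_speed hν hbound hg hg0 hx).ne') hh hs

theorem K_decomposition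
    (a : ℝ → ℝ) (ν : ℝ) (hν : 0 < ν)
    (ha : ContDiff ℝ 2 a) (hbound : ∀ s, ν ≤ a s)
    (p m : ℝ) (hp : 1 < p) (hm : 0 < m)
    (g : ℝ → ℝ)
    (hg : ∀ s, HasDerivAt g (1 / Real.sqrt (a (g s))) s) (hg0 : g 0 = 0)
    (h K H₁ H₂ : ℝ → ℝ)
    (hh : ∀ s > (0 : ℝ), h s = g s * deriv g s * (g s ^ (p - 1) - m))
    (hK : ∀ s > (0 : ℝ),
      K s = (deriv h s + s * deriv (deriv h) s) * h s - s * (deriv h s) ^ 2)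
    (hH₁ : ∀ s > (0 : ℝ),
      H₁ s = -(1 / 2) * deriv (deriv a) (g s) * s * (g s) ^ 2 * (deriv g s) ^ 3
        + (3 / 4) * (deriv a (g s)) ^ 2 * s * (g s) ^ 2 * (deriv g s) ^ 5
        - (1 / 2) * deriv a (g s) * g s * (deriv g s) ^ 2 * (p * s * deriv g s + g s)
        - p * s * deriv g s + p * g s)
    (hH₂ : ∀ s > (0 : ℝ),
      H₂ s = -(1 / 2) * deriv a (g s) * s * g s * (deriv g s) ^ 3
        + g s - p * s * deriv g s) :
    ∀ s > (0 : ℝ),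
      K s = (deriv g s) ^ 3 *
        ((g s ^ (p - 1) - m) ^ 2 * H₁ s
          + m * (p - 1) * (g s ^ (p - 1) - m) * H₂ s
          - m ^ 2 * s * (p - 1) ^ 2 * deriv g s) :=
  K_decomposition_general a ν hν ha hbound p m g hg hg0 h K H₁ H₂ hh hK hH₁ hH₂
end

section
/- Let a ∈ C²(ℝ) with a(s) ≥ ν > 0 for all s ∈ ℝ, let p > 1 and m > 0, let g be the solution of g'(s) = 1/√(a(g(s))), g(0) = 0, and define for s > 0: h(s) = g(s) g'(s) (g(s)^{p−1} − m), K(s) = (h'(s) + s h''(s)) h(s) − s (h'(s))², 𝓗₁(s) = −(1/2) a''(g(s)) s g(s)² (g'(s))³ + (3/4)(a'(g(s)))² s g(s)² (g'(s))⁵ − (1/2) a'(g(s)) g(s) (g'(s))² (p s g'(s) + g(s)) − p s g'(s) + p g(s), and 𝓗₂(s) = −(1/2) a'(g(s)) s g(s) (g'(s))³ + g(s) − p s g'(s). Then for every s > 0 the strict inequality K(s) < m² (g'(s))³ (g(s)^{p−1}/m − 1) [ (g(s)^{p−1}/m − 1) 𝓗₁(s) + (p−1) 𝓗₂(s) ]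 holds. -/
open Filter Real Topology Set

/-!
The ODE gives `g' = 1/√(a ∘ g) > 0`, hence `g > 0` on `(0, ∞)`, and, differentiating it along the
solution, `g'' = -½ a'(g) g'⁴` and `g''' = -½ a''(g) g'⁵ + a'(g)² g'⁷`. Substituting these into
`h'` and `h''` turns `K` into a rational expression in `g, g', a'(g), a''(g), g^(p-1)`, and it
equals the claimed bound minus `s m² (p - 1)² g'⁴`, which is positive for `s > 0`.
-/

theorem HasDerivAt.rpow_const_of_pos {f : ℝ → ℝ} {f' x : ℝ} (hf : HasDerivAt f f' x)
    (hx : 0 < f x) (r : ℝ) : HasDerivAt (fun t => f t ^ r) (r * f x ^ r * f' / f x) x := by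
  refine (hf.rpow_const (p := r) (Or.inl hx.ne')).congr_deriv ?_
  rw [rpow_sub_one hx.ne']
  ring

section HProfile

variable {g G g₂ : ℝ → ℝ} {s p m : ℝ}

theorem hasDerivAt_h_s14 {G' : ℝ} (hg : HasDerivAt g (G s) s) (hG : HasDerivAt G G' s)
    (hgs : 0 < g s) :
    HasDerivAt (fun t => g t * G t * (g t ^ (p - 1) - m))
      (G s ^ 2 * (p * g s ^ (p - 1) - m) + g s * G' * (g s ^ (p - 1) - m)) s := by
  refine ((hg.mul hG).mul ((hg.rpow_const_of_pos hgs (p - 1)).sub_const m)).congr_deriv ?_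
  simp only [Pi.mul_apply]
  field_simp
  ring

theorem hasDerivAt_deriv_h_s14 {g₃ : ℝ} (hg : HasDerivAt g (G s) s) (hG : HasDerivAt G (g₂ s) s)
    (hg₂ : HasDerivAt g₂ g₃ s) (hgs : 0 < g s) :
    HasDerivAt (fun t => G t ^ 2 * (p * g t ^ (p - 1) - m) + g t * g₂ t * (g t ^ (p - 1) - m))
      (2 * G s * g₂ s * (p * g s ^ (p - 1) - m) + p * (p - 1) * g s ^ (p - 1) * G s ^ 3 / g s
        + G s * g₂ s * (g s ^ (p - 1) - m) + g s * g₃ * (g s ^ (p - 1) - m)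
        + (p - 1) * g s ^ (p - 1) * G s * g₂ s) s := by
  have hu := hg.rpow_const_of_pos hgs (p - 1)
  refine (((hG.pow 2).mul ((hu.const_mul p).sub_const m)).add
    ((hg.mul hg₂).mul (hu.sub_const m))).congr_deriv ?_
  simp only [Pi.mul_apply, Pi.pow_apply]
  field_simp
  ring

end HProfile

theorem hasDerivAt_one_div_sqrt {a : ℝ → ℝ} {a' x : ℝ} (ha : HasDerivAt a a' x) (hx : 0 < a x) :
    HasDerivAt (fun y => 1 / √(a y)) (-(1 / 2) * a' * (1 / √(a x)) ^ 3) x := by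
  have hsqrt := sqrt_pos.mpr hx
  refine ((((hasDerivAt_sqrt hx.ne').comp x ha).inv hsqrt.ne').congr_deriv ?_)
    |>.congr_of_eventuallyEq ?_
  · simp only [Function.comp_apply]
    field_simp
  · filter_upwards with y using one_div _

theorem hasDerivAt_deriv_of_autonomous {f g : ℝ → ℝ} {f' s : ℝ}
    (hg : ∀ t, HasDerivAt g (f (g t)) t) (hf : HasDerivAt f f' (g s)) :
    HasDerivAt (deriv g) (f' * f (g s)) s := by
  have : deriv g = f ∘ g := funext fun t => (hg t).deriv
  rw [this]
  exact hf.comp s (hg s)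

section InvSqrtODE

variable {a g : ℝ → ℝ}

theorem deriv_pos_of_inv_sqrt_ode (ha : ∀ x, 0 < a x)
    (hg : ∀ s, HasDerivAt g (1 / √(a (g s))) s) (s : ℝ) : 0 < deriv g s := by
  rw [(hg s).deriv]
  exact one_div_pos.mpr (sqrt_pos.mpr (ha _))

theorem pos_of_inv_sqrt_ode (ha : ∀ x, 0 < a x) (hg : ∀ s, HasDerivAt g (1 / √(a (g s))) s)
    (hg0 : g 0 = 0) {s : ℝ} (hs : 0 < s) : 0 < g s :=
  hg0 ▸ strictMono_of_deriv_pos (deriv_pos_of_inv_sqrt_ode ha hg) hs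

theorem hasDerivAt_deriv_of_inv_sqrt_ode (ha : ∀ x, 0 < a x) (ha₁ : Differentiable ℝ a)
    (hg : ∀ s, HasDerivAt g (1 / √(a (g s))) s) (s : ℝ) :
    HasDerivAt (deriv g) (-(1 / 2) * deriv a (g s) * deriv g s ^ 4) s := by
  rw [(hg s).deriv]
  exact (hasDerivAt_deriv_of_autonomous hg
    (hasDerivAt_one_div_sqrt (ha₁ (g s)).hasDerivAt (ha (g s)))).congr_deriv (by ring)

theorem hasDerivAt_second_deriv_of_inv_sqrt_ode (ha : ∀ x, 0 < a x) (ha₁ : Differentiable ℝ a)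
    (ha₂ : Differentiable ℝ (deriv a)) (hg : ∀ s, HasDerivAt g (1 / √(a (g s))) s) (s : ℝ) :
    HasDerivAt (fun t => -(1 / 2) * deriv a (g t) * deriv g t ^ 4)
      (-(1 / 2) * deriv (deriv a) (g s) * deriv g s ^ 5 + deriv a (g s) ^ 2 * deriv g s ^ 7) s := by
  have hA := (ha₂ (g s)).hasDerivAt.comp s (hg s).differentiableAt.hasDerivAt
  refine ((hA.const_mul (-(1 / 2))).mul
    ((hasDerivAt_deriv_of_inv_sqrt_ode ha ha₁ hg s).pow 4)).congr_deriv ?_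
  simp only [Pi.pow_apply, Function.comp_apply]
  ring

end InvSqrtODE

theorem K_formula_eq_bound_sub (s x G A₁ A₂ u p m : ℝ) {g₂ g₃ : ℝ} (hx : x ≠ 0) (hm : m ≠ 0)
    (hg₂ : g₂ = -(1 / 2) * A₁ * G ^ 4) (hg₃ : g₃ = -(1 / 2) * A₂ * G ^ 5 + A₁ ^ 2 * G ^ 7) :
    (G ^ 2 * (p * u - m) + x * g₂ * (u - m)
        + s * (2 * G * g₂ * (p * u - m) + p * (p - 1) * u * G ^ 3 / x + G * g₂ * (u - m)
          + x * g₃ * (u - m) + (p - 1) * u * G * g₂)) * (x * G * (u - m))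
        - s * (G ^ 2 * (p * u - m) + x * g₂ * (u - m)) ^ 2
      = m ^ 2 * G ^ 3 * (u / m - 1) *
          ((u / m - 1) * (-(1 / 2) * A₂ * s * x ^ 2 * G ^ 3 + (3 / 4) * A₁ ^ 2 * s * x ^ 2 * G ^ 5
              - (1 / 2) * A₁ * x * G ^ 2 * (p * s * G + x) - p * s * G + p * x)
            + (p - 1) * (-(1 / 2) * A₁ * s * x * G ^ 3 + x - p * s * G))
        - s * m ^ 2 * (p - 1) ^ 2 * G ^ 4 := by
  subst hg₂ hg₃
  field_simp
  ring

theorem K_strict_upper_bound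
    (a : ℝ → ℝ) (ν : ℝ) (hν : 0 < ν)
    (ha : ContDiff ℝ 2 a) (hbound : ∀ s, ν ≤ a s)
    (p m : ℝ) (hp : 1 < p) (hm : 0 < m)
    (g : ℝ → ℝ)
    (hg : ∀ s, HasDerivAt g (1 / Real.sqrt (a (g s))) s) (hg0 : g 0 = 0)
    (h K H₁ H₂ : ℝ → ℝ)
    (hh : ∀ s > (0 : ℝ), h s = g s * deriv g s * (g s ^ (p - 1) - m))
    (hK : ∀ s > (0 : ℝ),
      K s = (deriv h s + s * deriv (deriv h) s) * h s - s * (deriv h s) ^ 2)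
    (hH₁ : ∀ s > (0 : ℝ),
      H₁ s = -(1 / 2) * deriv (deriv a) (g s) * s * (g s) ^ 2 * (deriv g s) ^ 3
        + (3 / 4) * (deriv a (g s)) ^ 2 * s * (g s) ^ 2 * (deriv g s) ^ 5
        - (1 / 2) * deriv a (g s) * g s * (deriv g s) ^ 2 * (p * s * deriv g s + g s)
        - p * s * deriv g s + p * g s)
    (hH₂ : ∀ s > (0 : ℝ),
      H₂ s = -(1 / 2) * deriv a (g s) * s * g s * (deriv g s) ^ 3
        + g s - p * s * deriv g s) :
    ∀ s > (0 : ℝ),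
      K s < m ^ 2 * (deriv g s) ^ 3 * (g s ^ (p - 1) / m - 1) *
        ((g s ^ (p - 1) / m - 1) * H₁ s + (p - 1) * H₂ s) := by
  intro s hs
  have ha_pos : ∀ x, 0 < a x := fun x => hν.trans_le (hbound x)
  have ha₁ : Differentiable ℝ a := ha.differentiable two_ne_zero
  have ha₂ : Differentiable ℝ (deriv a) := ha.differentiable_deriv_two
  have hg' : ∀ t, HasDerivAt g (deriv g t) t := fun t => (hg t).differentiableAt.hasDerivAt
  have hg'' := hasDerivAt_deriv_of_inv_sqrt_ode ha_pos ha₁ hg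
  have hg_pos : ∀ t > 0, 0 < g t := fun t => pos_of_inv_sqrt_ode ha_pos hg hg0
  have hh_on : EqOn h (fun t => g t * deriv g t * (g t ^ (p - 1) - m)) (Ioi 0) :=
    fun t ht => hh t ht
  have hdh : EqOn (deriv h) (fun t => deriv g t ^ 2 * (p * g t ^ (p - 1) - m)
      + g t * (-(1 / 2) * deriv a (g t) * deriv g t ^ 4) * (g t ^ (p - 1) - m)) (Ioi 0) :=
    fun t ht => (hh_on.deriv isOpen_Ioi ht).trans
      (hasDerivAt_h_s14 (hg' t) (hg'' t) (hg_pos t ht)).deriv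
  have hddh := (hdh.deriv isOpen_Ioi hs).trans (hasDerivAt_deriv_h_s14 (hg' s) (hg'' s)
    (hasDerivAt_second_deriv_of_inv_sqrt_ode ha_pos ha₁ ha₂ hg s) (hg_pos s hs)).deriv
  have hgap : 0 < s * m ^ 2 * (p - 1) ^ 2 * deriv g s ^ 4 := by
    have := deriv_pos_of_inv_sqrt_ode ha_pos hg s
    have : 0 < p - 1 := by linarith
    positivity
  rw [hK s hs, hh s hs, hdh hs, hddh, hH₁ s hs, hH₂ s hs]
  linarith [K_formula_eq_bound_sub s (g s) (deriv g s) (deriv a (g s)) (deriv (deriv a) (g s))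
    (g s ^ (p - 1)) p m (hg_pos s hs).ne' hm.ne' rfl rfl]
end

section
/- Let k > 0, a₁ > 0 and ψ ∈ C²(ℝ) with ψ(s) ≥ ν > 0 for all s ∈ ℝ, and set a₀(s) = a₁|s|^k + ψ(s). Let g₀ be the solution of g₀'(s) = 1/√(a₀(g₀(s))), g₀(0) = 0, and define G₀(s) = s − (2/(k+2)) g₀(s) √(a₀(g₀(s))) for s ≥ 0. Assume ψ(s)/s^k → 0 as s → +∞, kψ(s) − sψ'(s) ≥ 0 for all s ≥ 0, and, in the case 0 < k ≤ 2, that kψ(s) − sψ'(s) → α as s → +∞ for some α > 0. Then: G₀ is nondecreasing on [0,∞), G₀(s) ≥ 0 for every s ≥ 0, G₀(s) > 0 for all sufficiently large s, and lim_{s→+∞} s(g₀'(s))²/G₀(s) equals 0 if k ≥ 2 and equals (2−k)/α if 0 < k < 2. -/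
/-!
Put `t = g₀ s`. Since `t * (a₁ * t ^ k)' = k * (a₁ * t ^ k)`, the power terms cancel in
`G₀' s = (k * a₀ t - t * a₀' t) / ((k + 2) * a₀ t) = (k * ψ t - t * ψ' t) / ((k + 2) * a₀ t)`.
This is nonnegative, and positive near `s = 0` where the numerator is close to `k * ψ 0 > 0`;
so `G₀` is nondecreasing, vanishes at `0` and is positive on `(0, ∞)`.

For the limit, `s * g₀' s ^ 2 = s / a₀ t` and `a₀ t ~ a₁ * t ^ k`. L'Hôpital's rule at `+∞`,
applied in the variable `t` (where `ds = √(a₀ t) dt`), gives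
`s ~ 2 √a₁ / (k + 2) * t ^ ((k + 2) / 2)`, and, as `k * ψ t - t * ψ' t → α`,
`G₀ ~ 2 α / ((k + 2) (2 - k) √a₁) * t ^ ((2 - k) / 2)` for `k < 2` and
`G₀ ~ α / (4 √a₁) * log t` for `k = 2`. For `k > 2` already `s / a₀ t → 0`, while `G₀` stays
bounded below by a positive constant.
-/

open Filter Real Topology Set

theorem eventually_div_lt_of_hasDerivAt_le {f g f' g' : ℝ → ℝ} {c d : ℝ}
    (hf : ∀ᶠ x in atTop, HasDerivAt f (f' x) x) (hg : ∀ᶠ x in atTop, HasDerivAt g (g' x) x)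
    (hgtop : Tendsto g atTop atTop) (hle : ∀ᶠ x in atTop, f' x ≤ c * g' x) (hcd : c < d) :
    ∀ᶠ x in atTop, f x / g x < d := by
  obtain ⟨a, ha⟩ := ((hf.and hg).and hle).exists_forall_of_atTop
  -- `c * g - f` is monotone beyond `a`, so `f x / g x ≤ c + (f a - c * g a) / g x`.
  have hderiv : ∀ x ∈ Ici a, HasDerivAt (fun y => c * g y - f y) (c * g' x - f' x) x :=
    fun x hx => ((ha x hx).1.2.const_mul c).sub (ha x hx).1.1
  have hmono : MonotoneOn (fun y => c * g y - f y) (Ici a) :=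
    monotoneOn_of_hasDerivWithinAt_nonneg (convex_Ici a)
      (fun x hx => (hderiv x hx).continuousAt.continuousWithinAt)
      (fun x hx => (hderiv x (interior_subset hx)).hasDerivWithinAt)
      (fun x hx => sub_nonneg.2 (ha x (interior_subset hx)).2)
  have hrem : Tendsto (fun x => (f a - c * g a) / g x) atTop (𝓝 0) :=
    tendsto_const_nhds.div_atTop hgtop
  filter_upwards [hrem.eventually (gt_mem_nhds (sub_pos.2 hcd)), hgtop.eventually_gt_atTop 0,
    eventually_ge_atTop a] with x hrx hgx hx
  have hax := hmono self_mem_Ici hx hx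
  rw [div_lt_iff₀ hgx] at hrx ⊢
  linarith

theorem lhopital_atTop_of_tendsto_atTop {f g f' g' : ℝ → ℝ} {l : ℝ}
    (hf : ∀ᶠ x in atTop, HasDerivAt f (f' x) x) (hg : ∀ᶠ x in atTop, HasDerivAt g (g' x) x)
    (hg' : ∀ᶠ x in atTop, 0 < g' x) (hgtop : Tendsto g atTop atTop)
    (hlim : Tendsto (fun x => f' x / g' x) atTop (𝓝 l)) :
    Tendsto (fun x => f x / g x) atTop (𝓝 l) := by
  refine tendsto_order.2 ⟨fun d hd => ?_, fun d hd => ?_⟩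
  · obtain ⟨c, hdc, hcl⟩ := exists_between hd
    have hle : ∀ᶠ x in atTop, -f' x ≤ -c * g' x := by
      filter_upwards [hlim.eventually (lt_mem_nhds hcl), hg'] with x hx hgx
      linarith [(lt_div_iff₀ hgx).1 hx]
    filter_upwards [eventually_div_lt_of_hasDerivAt_le (hf.mono fun x hx => hx.neg) hg hgtop hle
      (neg_lt_neg hdc)] with x hx
    rw [Pi.neg_apply, neg_div] at hx
    linarith
  · obtain ⟨c, hlc, hcd⟩ := exists_between hd
    refine eventually_div_lt_of_hasDerivAt_le hf hg hgtop ?_ hcd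
    filter_upwards [hlim.eventually (gt_mem_nhds hlc), hg'] with x hx hgx
    exact ((div_lt_iff₀ hgx).1 hx).le

theorem lhopital_atTop_comp_of_tendsto_atTop {f f' F u w w' : ℝ → ℝ} {l : ℝ}
    (hf : ∀ᶠ s in atTop, HasDerivAt f (f' s) s) (hf' : ∀ᶠ s in atTop, 0 < f' s)
    (hftop : Tendsto f atTop atTop) (hF : ∀ᶠ s in atTop, HasDerivAt F (u (f s) * f' s) s)
    (hw : ∀ᶠ t in atTop, HasDerivAt w (w' t) t) (hw' : ∀ᶠ t in atTop, 0 < w' t)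
    (hwtop : Tendsto w atTop atTop) (hlim : Tendsto (fun t => u t / w' t) atTop (𝓝 l)) :
    Tendsto (fun s => F s / w (f s)) atTop (𝓝 l) := by
  refine lhopital_atTop_of_tendsto_atTop hF (g' := fun s => w' (f s) * f' s) ?_ ?_
    (hwtop.comp hftop) ?_
  · filter_upwards [hftop.eventually hw, hf] with s hws hfs
    exact hws.comp s hfs
  · filter_upwards [hftop.eventually hw', hf'] with s hws hfs
    exact mul_pos hws hfs
  · refine (hlim.comp hftop).congr' ?_
    filter_upwards [hf'] with s hs
    exact (mul_div_mul_right _ _ hs.ne').symm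

theorem tendsto_atTop_of_hasDerivAt_comp_s15 {f h : ℝ → ℝ} (hh : Continuous h) (hpos : ∀ x, 0 < h x)
    (hf : ∀ s, HasDerivAt f (h (f s)) s) : Tendsto f atTop atTop := by
  have hmono : StrictMono f := strictMono_of_hasDerivAt_pos hf fun s => hpos _
  refine tendsto_atTop_atTop_of_monotone hmono.monotone fun b => ?_
  by_contra! hlt
  obtain ⟨y, -, hy⟩ := isCompact_Icc.exists_isMinOn (nonempty_Icc.2 (hlt 0).le)
    hh.continuousOn
  set s := (b - f 0) / h y + 1
  have hs : 0 < s := by have := hlt 0; have := hpos y; positivity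
  obtain ⟨c, hc, hslope⟩ := exists_hasDerivAt_eq_slope f (fun t => h (f t)) hs
    (fun t _ => (hf t).continuousAt.continuousWithinAt) fun t _ => hf t
  have hmin : h y ≤ h (f c) := hy ⟨hmono.monotone hc.1.le, (hlt c).le⟩
  rw [hslope, sub_zero, le_div_iff₀ hs] at hmin
  have hys : h y * s = b - f 0 + h y := by
    simp only [s]; field_simp [(hpos y).ne']
  linarith [hlt s, hpos y]

theorem monotoneOn_Ici_and_lt_of_hasDerivAt {F F' : ℝ → ℝ} {a : ℝ}
    (hcont : ContinuousOn F (Ici a)) (hF : ∀ y > a, HasDerivAt F (F' y) y)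
    (hnonneg : ∀ y > a, 0 ≤ F' y) (hpos : ∀ᶠ y in 𝓝[>] a, 0 < F' y) :
    MonotoneOn F (Ici a) ∧ ∀ x > a, F a < F x := by
  have hmono : MonotoneOn F (Ici a) :=
    monotoneOn_of_hasDerivWithinAt_nonneg (convex_Ici a) hcont
      (fun y hy => (hF y (interior_Ici.subset hy)).hasDerivWithinAt)
      fun y hy => hnonneg y (interior_Ici.subset hy)
  refine ⟨hmono, fun x hx => ?_⟩
  obtain ⟨b, hab, hb⟩ := mem_nhdsGT_iff_exists_Ioo_subset.1 hpos
  have hy : a < min x b := lt_min hx hab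
  have hstrict : StrictMonoOn F (Icc a (min x b)) := by
    refine strictMonoOn_of_hasDerivWithinAt_pos (f' := F') (convex_Icc _ _)
      (hcont.mono Icc_subset_Ici_self) (fun y hy => ?_) fun y hy => ?_
    · rw [interior_Icc] at hy
      exact (hF y hy.1).hasDerivWithinAt
    · rw [interior_Icc] at hy
      exact hb ⟨hy.1, hy.2.trans_le (min_le_right _ _)⟩
  calc F a < F (min x b) := hstrict (left_mem_Icc.2 hy.le) (right_mem_Icc.2 hy.le) hy
    _ ≤ F x := hmono hy.le hx.le (min_le_left _ _)

theorem hasDerivAt_sub_mul_sqrt_comp {a f : ℝ → ℝ} {a' c s : ℝ}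
    (hf : HasDerivAt f (1 / √(a (f s))) s) (ha : HasDerivAt a a' (f s)) (hpos : 0 < a (f s)) :
    HasDerivAt (fun u => u - c * f u * √(a (f u))) (1 - c - c * f s * a' / (2 * a (f s))) s := by
  refine ((hasDerivAt_id' s).sub ((hf.const_mul c).mul
    ((ha.comp s hf).sqrt hpos.ne'))).congr_deriv ?_
  have := sqrt_pos.2 hpos
  rw [Function.comp_apply]
  field_simp
  rw [sq_sqrt hpos.le]
  ring

theorem hasDerivAt_mul_abs_rpow_add {ψ : ℝ → ℝ} {a₁ k t : ℝ} (ht : 0 < t)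
    (hψ : DifferentiableAt ℝ ψ t) :
    HasDerivAt (fun u => a₁ * |u| ^ k + ψ u) (a₁ * (k * t ^ (k - 1)) + deriv ψ t) t := by
  refine (((hasDerivAt_rpow_const (Or.inl ht.ne')).const_mul a₁).add
    hψ.hasDerivAt).congr_of_eventuallyEq ?_
  filter_upwards [Ioi_mem_nhds ht] with u hu
  rw [Pi.add_apply, abs_of_pos hu]

theorem continuous_mul_abs_rpow_add {ψ : ℝ → ℝ} {a₁ k : ℝ} (hk : 0 ≤ k) (hψ : Continuous ψ) :
    Continuous fun t => a₁ * |t| ^ k + ψ t :=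
  (continuous_const.mul (continuous_abs.rpow_const fun _ => Or.inr hk)).add hψ

theorem eventually_pos_mul_sub_mul_deriv {ψ : ℝ → ℝ} {k : ℝ} (hψ : ContDiff ℝ 1 ψ) (hk : 0 < k)
    (hψ0 : 0 < ψ 0) : ∀ᶠ t in 𝓝 0, 0 < k * ψ t - t * deriv ψ t := by
  have hcont : Continuous fun t => k * ψ t - t * deriv ψ t :=
    (continuous_const.mul hψ.continuous).sub (continuous_id.mul (hψ.continuous_deriv le_rfl))
  exact hcont.continuousAt.eventually (lt_mem_nhds (by simpa using mul_pos hk hψ0))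

section

variable {ψ a f G : ℝ → ℝ} {a₁ k : ℝ}

theorem tendsto_div_rpow_of_eq_abs_rpow_add (ha : ∀ t, a t = a₁ * |t| ^ k + ψ t)
    (hψ : Tendsto (fun t => ψ t / t ^ k) atTop (𝓝 0)) :
    Tendsto (fun t => a t / t ^ k) atTop (𝓝 a₁) := by
  have hlim := (tendsto_const_nhds (x := a₁)).add hψ
  rw [add_zero] at hlim
  refine hlim.congr' ?_
  filter_upwards [eventually_gt_atTop 0] with t ht
  rw [ha, abs_of_pos ht, add_div, mul_div_cancel_right₀ _ (rpow_pos_of_pos ht k).ne']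

theorem hasDerivAt_of_eq_sub_mul_sqrt {s : ℝ} (hk : k + 2 ≠ 0)
    (ha : ∀ t, a t = a₁ * |t| ^ k + ψ t) (hG : ∀ s, G s = s - 2 / (k + 2) * f s * √(a (f s)))
    (hpos : 0 < a (f s)) (hψ : DifferentiableAt ℝ ψ (f s))
    (hf : HasDerivAt f (1 / √(a (f s))) s) (hfs : 0 < f s) :
    HasDerivAt G ((k * ψ (f s) - f s * deriv ψ (f s)) / ((k + 2) * a (f s))) s := by
  rw [funext hG]
  rw [funext ha] at hf hpos ⊢
  convert hasDerivAt_sub_mul_sqrt_comp hf (hasDerivAt_mul_abs_rpow_add hfs hψ) hpos using 1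
  simp only [abs_of_pos hfs] at hpos ⊢
  rw [rpow_sub_one hfs.ne']
  field_simp
  ring

theorem monotoneOn_Ici_and_pos_of_eq_sub_mul_sqrt (hk : 0 < k) (hψ : ContDiff ℝ 1 ψ)
    (ha : ∀ t, a t = a₁ * |t| ^ k + ψ t) (hpos : ∀ t, 0 < a t)
    (hG : ∀ s, G s = s - 2 / (k + 2) * f s * √(a (f s)))
    (hf : ∀ s, HasDerivAt f (1 / √(a (f s))) s) (hf0 : f 0 = 0)
    (hsign : ∀ t ≥ (0 : ℝ), 0 ≤ k * ψ t - t * deriv ψ t) :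
    MonotoneOn G (Ici 0) ∧ ∀ s > 0, 0 < G s := by
  have hfcont : Continuous f := continuous_iff_continuousAt.2 fun s => (hf s).continuousAt
  have hacont : Continuous a := funext ha ▸ continuous_mul_abs_rpow_add hk.le hψ.continuous
  have hGcont : Continuous G := by
    rw [funext hG]
    exact continuous_id.sub ((continuous_const.mul hfcont).mul (hacont.comp hfcont).sqrt)
  have hfpos : ∀ s > 0, 0 < f s := fun s hs => hf0 ▸
    strictMono_of_hasDerivAt_pos hf (fun s => one_div_pos.2 (sqrt_pos.2 (hpos _))) hs
  have hψ0 : 0 < ψ 0 := by simpa [ha, hk.ne'] using hpos 0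
  have hnear0 : ∀ᶠ s in 𝓝[>] 0, 0 < k * ψ (f s) - f s * deriv ψ (f s) :=
    ((hf0 ▸ hfcont.tendsto 0).mono_left nhdsWithin_le_nhds).eventually
      (eventually_pos_mul_sub_mul_deriv hψ hk hψ0)
  have hden : ∀ s, 0 < (k + 2) * a (f s) := fun s => mul_pos (by linarith) (hpos _)
  obtain ⟨hmono, hlt⟩ := monotoneOn_Ici_and_lt_of_hasDerivAt hGcont.continuousOn
    (fun s hs => hasDerivAt_of_eq_sub_mul_sqrt (by linarith) ha hG (hpos _)
      (hψ.differentiable one_ne_zero _) (hf s) (hfpos s hs))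
    (fun s hs => div_nonneg (hsign _ (hfpos s hs).le) (hden s).le)
    (hnear0.mono fun s hs => div_pos hs (hden s))
  have hG0 : G 0 = 0 := by simp [hG, hf0]
  exact ⟨hmono, fun s hs => hG0 ▸ hlt s hs⟩

end

section

variable {a f G φ : ℝ → ℝ} {k a₁ α : ℝ}

theorem tendsto_sqrt_div_rpow (hak : Tendsto (fun t => a t / t ^ k) atTop (𝓝 a₁)) :
    Tendsto (fun t => √(a t) / t ^ (k / 2)) atTop (𝓝 √a₁) := by
  refine ((continuous_sqrt.tendsto a₁).comp hak).congr' ?_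
  filter_upwards [eventually_gt_atTop 0] with t ht
  rw [Function.comp_apply, sqrt_div' _ (rpow_pos_of_pos ht k).le, sqrt_eq_rpow (t ^ k),
    ← rpow_mul ht.le, mul_one_div]

theorem tendsto_div_rpow_of_hasDerivAt_inv_sqrt (hk : -2 < k) (ha : ∀ t, 0 < a t)
    (hak : Tendsto (fun t => a t / t ^ k) atTop (𝓝 a₁))
    (hf : ∀ s, HasDerivAt f (1 / √(a (f s))) s) (hftop : Tendsto f atTop atTop) :
    Tendsto (fun s => s / f s ^ ((k + 2) / 2)) atTop (𝓝 (2 * √a₁ / (k + 2))) := by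
  have hq : 0 < (k + 2) / 2 := by linarith
  refine lhopital_atTop_comp_of_tendsto_atTop (F := id) (u := fun t => √(a t))
    (Eventually.of_forall hf) (Eventually.of_forall fun s => one_div_pos.2 (sqrt_pos.2 (ha _)))
    hftop (Eventually.of_forall fun s => ?_)
    (eventually_gt_atTop 0 |>.mono fun t ht => hasDerivAt_rpow_const (Or.inl ht.ne'))
    (eventually_gt_atTop 0 |>.mono fun t ht => mul_pos hq (rpow_pos_of_pos ht _))
    (tendsto_rpow_atTop hq) ?_
  · rw [mul_one_div_cancel (sqrt_pos.2 (ha _)).ne']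
    exact hasDerivAt_id s
  · rw [show 2 * √a₁ / (k + 2) = √a₁ / ((k + 2) / 2) by field_simp]
    refine ((tendsto_sqrt_div_rpow hak).div_const ((k + 2) / 2)).congr' ?_
    filter_upwards [eventually_gt_atTop 0] with t ht
    rw [show (k + 2) / 2 - 1 = k / 2 by ring]
    field_simp

theorem tendsto_div_comp_mul_rpow (hk : -2 < k) (ha : ∀ t, 0 < a t)
    (hak : Tendsto (fun t => a t / t ^ k) atTop (𝓝 a₁)) (ha₁ : 0 < a₁)
    (hf : ∀ s, HasDerivAt f (1 / √(a (f s))) s) (hftop : Tendsto f atTop atTop) :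
    Tendsto (fun s => s / a (f s) * f s ^ ((k - 2) / 2)) atTop
      (𝓝 (2 * √a₁ / (k + 2) / a₁)) := by
  refine ((tendsto_div_rpow_of_hasDerivAt_inv_sqrt hk ha hak hf hftop).div (hak.comp hftop)
    ha₁.ne').congr' ?_
  filter_upwards [hftop.eventually_gt_atTop 0] with s hs
  rw [Pi.div_apply, Function.comp_apply, show (k - 2) / 2 = k - (k + 2) / 2 by ring, rpow_sub hs]
  have := ha (f s)
  have := rpow_pos_of_pos hs k
  have := rpow_pos_of_pos hs ((k + 2) / 2)
  field_simp

theorem tendsto_div_rpow_of_hasDerivAt_div (hk : -2 < k) (hk2 : k < 2) (ha : ∀ t, 0 < a t)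
    (hak : Tendsto (fun t => a t / t ^ k) atTop (𝓝 a₁)) (ha₁ : 0 < a₁)
    (hf : ∀ s, HasDerivAt f (1 / √(a (f s))) s) (hftop : Tendsto f atTop atTop)
    (hG : ∀ᶠ s in atTop, HasDerivAt G (φ (f s) / ((k + 2) * a (f s))) s)
    (hφ : Tendsto φ atTop (𝓝 α)) :
    Tendsto (fun s => G s / f s ^ ((2 - k) / 2)) atTop
      (𝓝 (2 * α / ((k + 2) * (2 - k) * √a₁))) := by
  have hp : 0 < (2 - k) / 2 := by linarith
  have hk2' : 0 < k + 2 := by linarith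
  refine lhopital_atTop_comp_of_tendsto_atTop (u := fun t => φ t / ((k + 2) * √(a t)))
    (Eventually.of_forall hf) (Eventually.of_forall fun s => one_div_pos.2 (sqrt_pos.2 (ha _)))
    hftop ?_
    (eventually_gt_atTop 0 |>.mono fun t ht => hasDerivAt_rpow_const (Or.inl ht.ne'))
    (eventually_gt_atTop 0 |>.mono fun t ht => mul_pos hp (rpow_pos_of_pos ht _))
    (tendsto_rpow_atTop hp) ?_
  · filter_upwards [hG] with s hs
    convert hs using 1
    have := ha (f s)
    have := sqrt_pos.2 this
    field_simp
    rw [sq_sqrt (ha _).le]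
  · rw [show 2 * α / ((k + 2) * (2 - k) * √a₁) = α / ((k + 2) * ((2 - k) / 2) * √a₁) by
      field_simp]
    refine (hφ.div ((tendsto_sqrt_div_rpow hak).const_mul ((k + 2) * ((2 - k) / 2)))
      (by positivity)).congr' ?_
    filter_upwards [eventually_gt_atTop 0] with t ht
    rw [Pi.div_apply, show (2 - k) / 2 - 1 = -(k / 2) by ring, rpow_neg ht.le]
    have := rpow_pos_of_pos ht (k / 2)
    have := sqrt_pos.2 (ha t)
    field_simp

theorem tendsto_div_log_of_hasDerivAt_div (hk : k = 2) (ha : ∀ t, 0 < a t)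
    (hak : Tendsto (fun t => a t / t ^ k) atTop (𝓝 a₁)) (ha₁ : 0 < a₁)
    (hf : ∀ s, HasDerivAt f (1 / √(a (f s))) s) (hftop : Tendsto f atTop atTop)
    (hG : ∀ᶠ s in atTop, HasDerivAt G (φ (f s) / ((k + 2) * a (f s))) s)
    (hφ : Tendsto φ atTop (𝓝 α)) :
    Tendsto (fun s => G s / log (f s)) atTop (𝓝 (α / (4 * √a₁))) := by
  subst hk
  refine lhopital_atTop_comp_of_tendsto_atTop (u := fun t => φ t / (4 * √(a t)))
    (Eventually.of_forall hf) (Eventually.of_forall fun s => one_div_pos.2 (sqrt_pos.2 (ha _)))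
    hftop ?_ (eventually_ne_atTop 0 |>.mono fun t ht => hasDerivAt_log ht)
    (eventually_gt_atTop 0 |>.mono fun t ht => inv_pos.2 ht) tendsto_log_atTop ?_
  · filter_upwards [hG] with s hs
    convert hs using 1
    have := ha (f s)
    have := sqrt_pos.2 this
    field_simp
    rw [sq_sqrt (ha _).le]
    ring
  · refine (hφ.div ((tendsto_sqrt_div_rpow hak).const_mul 4) (by positivity)).congr' ?_
    filter_upwards [eventually_gt_atTop 0] with t ht
    rw [Pi.div_apply, show (2 : ℝ) / 2 = 1 by norm_num, rpow_one]
    have := sqrt_pos.2 (ha t)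
    field_simp

theorem tendsto_div_mul_of_lt_two (hk : -2 < k) (hk2 : k < 2) (ha : ∀ t, 0 < a t)
    (hak : Tendsto (fun t => a t / t ^ k) atTop (𝓝 a₁)) (ha₁ : 0 < a₁)
    (hf : ∀ s, HasDerivAt f (1 / √(a (f s))) s) (hftop : Tendsto f atTop atTop)
    (hG : ∀ᶠ s in atTop, HasDerivAt G (φ (f s) / ((k + 2) * a (f s))) s)
    (hφ : Tendsto φ atTop (𝓝 α)) (hα : 0 < α) :
    Tendsto (fun s => s / (a (f s) * G s)) atTop (𝓝 ((2 - k) / α)) := by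
  have hlim := (tendsto_div_comp_mul_rpow hk ha hak ha₁ hf hftop).div
    (tendsto_div_rpow_of_hasDerivAt_div hk hk2 ha hak ha₁ hf hftop hG hφ)
    (by have : 0 < k + 2 := by linarith
        have : 0 < 2 - k := by linarith
        positivity)
  convert hlim.congr' ?_ using 2
  · have := sqrt_pos.2 ha₁
    have : 0 < k + 2 := by linarith
    field_simp
    rw [sq_sqrt ha₁.le]
  filter_upwards [hftop.eventually_gt_atTop 0] with s hs
  rw [Pi.div_apply, show (k - 2) / 2 = -((2 - k) / 2) by ring, rpow_neg hs.le]
  have := rpow_pos_of_pos hs ((2 - k) / 2)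
  have := ha (f s)
  field_simp

theorem tendsto_div_mul_of_eq_two (hk : k = 2) (ha : ∀ t, 0 < a t)
    (hak : Tendsto (fun t => a t / t ^ k) atTop (𝓝 a₁)) (ha₁ : 0 < a₁)
    (hf : ∀ s, HasDerivAt f (1 / √(a (f s))) s) (hftop : Tendsto f atTop atTop)
    (hG : ∀ᶠ s in atTop, HasDerivAt G (φ (f s) / ((k + 2) * a (f s))) s)
    (hφ : Tendsto φ atTop (𝓝 α)) (hα : 0 < α) :
    Tendsto (fun s => s / (a (f s) * G s)) atTop (𝓝 0) := by
  have hGtop : Tendsto G atTop atTop := by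
    refine ((tendsto_div_log_of_hasDerivAt_div hk ha hak ha₁ hf hftop hG hφ).pos_mul_atTop
      (by positivity) (tendsto_log_atTop.comp hftop)).congr' ?_
    filter_upwards [(tendsto_log_atTop.comp hftop).eventually_gt_atTop 0] with s hs
    exact div_mul_cancel₀ _ hs.ne'
  have hlim := (tendsto_div_comp_mul_rpow (by linarith) ha hak ha₁ hf hftop).mul
    hGtop.inv_tendsto_atTop
  rw [mul_zero] at hlim
  refine hlim.congr fun s => ?_
  rw [Pi.inv_apply, hk, sub_self, zero_div, rpow_zero, mul_one, ← div_eq_mul_inv, div_div]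

theorem tendsto_div_mul_of_two_lt (hk2 : 2 < k) (ha : ∀ t, 0 < a t)
    (hak : Tendsto (fun t => a t / t ^ k) atTop (𝓝 a₁)) (ha₁ : 0 < a₁)
    (hf : ∀ s, HasDerivAt f (1 / √(a (f s))) s) (hftop : Tendsto f atTop atTop) {c : ℝ}
    (hc : 0 < c) (hG : ∀ᶠ s in atTop, c ≤ G s) :
    Tendsto (fun s => s / (a (f s) * G s)) atTop (𝓝 0) := by
  have hsa : Tendsto (fun s => s / a (f s)) atTop (𝓝 0) := by
    have hlim := (tendsto_div_comp_mul_rpow (by linarith) ha hak ha₁ hf hftop).mul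
      ((tendsto_rpow_neg_atTop (y := (k - 2) / 2) (by linarith)).comp hftop)
    rw [mul_zero] at hlim
    refine hlim.congr' ?_
    filter_upwards [hftop.eventually_gt_atTop 0] with s hs
    rw [Function.comp_apply, mul_assoc, ← rpow_add hs, add_neg_cancel, rpow_zero, mul_one]
  refine squeeze_zero' ?_ ?_ (hsa.div_const c |>.trans (by rw [zero_div]))
  · filter_upwards [eventually_ge_atTop 0, hG] with s hs hGs
    exact div_nonneg hs (mul_nonneg (ha _).le (hc.trans_le hGs).le)
  · filter_upwards [eventually_ge_atTop 0, hG] with s hs hGs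
    rw [div_div]
    exact div_le_div_of_nonneg_left hs (mul_pos (ha _) hc) (by gcongr; exact (ha _).le)

end

theorem G0_monotone_and_limit
    (k a₁ : ℝ) (hk : 0 < k) (ha₁ : 0 < a₁)
    (ψ : ℝ → ℝ) (ν : ℝ) (hν : 0 < ν)
    (hψ : ContDiff ℝ 2 ψ) (hbound : ∀ s, ν ≤ ψ s)
    (a₀ : ℝ → ℝ) (ha₀ : ∀ s, a₀ s = a₁ * |s| ^ k + ψ s)
    (g₀ : ℝ → ℝ)
    (hg₀ : ∀ s, HasDerivAt g₀ (1 / Real.sqrt (a₀ (g₀ s))) s) (hg₀0 : g₀ 0 = 0)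
    (G₀ : ℝ → ℝ)
    (hG₀ : ∀ s, G₀ s = s - (2 / (k + 2)) * g₀ s * Real.sqrt (a₀ (g₀ s)))
    (hψsmall : Tendsto (fun s : ℝ => ψ s / s ^ k) atTop (𝓝 0))
    (hsign : ∀ s ≥ (0 : ℝ), 0 ≤ k * ψ s - s * deriv ψ s)
    (α : ℝ)
    (hα : k ≤ 2 → 0 < α ∧
      Tendsto (fun s : ℝ => k * ψ s - s * deriv ψ s) atTop (𝓝 α)) :
    MonotoneOn G₀ (Set.Ici 0) ∧
    (∀ s ≥ (0 : ℝ), 0 ≤ G₀ s) ∧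
    (∀ᶠ s in atTop, 0 < G₀ s) ∧
    (2 ≤ k → Tendsto (fun s : ℝ => s * (deriv g₀ s) ^ 2 / G₀ s) atTop (𝓝 0)) ∧
    (k < 2 → Tendsto (fun s : ℝ => s * (deriv g₀ s) ^ 2 / G₀ s) atTop
      (𝓝 ((2 - k) / α))) := by
  have hψ1 : ContDiff ℝ 1 ψ := hψ.of_le (by norm_num)
  have ha₀pos : ∀ t, 0 < a₀ t := fun t => by
    rw [ha₀]; exact add_pos_of_nonneg_of_pos (by positivity) (hν.trans_le (hbound t))
  have hg₀top : Tendsto g₀ atTop atTop := tendsto_atTop_of_hasDerivAt_comp_s15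
    (continuous_const.div (funext ha₀ ▸ continuous_mul_abs_rpow_add hk.le hψ.continuous).sqrt
      fun t => (sqrt_pos.2 (ha₀pos t)).ne')
    (fun t => one_div_pos.2 (sqrt_pos.2 (ha₀pos t))) hg₀
  obtain ⟨hmono, hpos⟩ :=
    monotoneOn_Ici_and_pos_of_eq_sub_mul_sqrt hk hψ1 ha₀ ha₀pos hG₀ hg₀ hg₀0 hsign
  have hG₀' := (hg₀top.eventually_gt_atTop 0).mono fun s hs =>
    hasDerivAt_of_eq_sub_mul_sqrt (by linarith) ha₀ hG₀ (ha₀pos _)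
      (hψ1.differentiable one_ne_zero _) (hg₀ s) hs
  have hak := tendsto_div_rpow_of_eq_abs_rpow_add ha₀ hψsmall
  have hratio : (fun s => s * deriv g₀ s ^ 2 / G₀ s) = fun s => s / (a₀ (g₀ s) * G₀ s) :=
    funext fun s => by
      rw [(hg₀ s).deriv, div_pow, one_pow, sq_sqrt (ha₀pos _).le, mul_one_div, div_div]
  rw [hratio]
  refine ⟨hmono, fun s hs => ?_, (eventually_gt_atTop 0).mono hpos, fun hk2 => ?_, fun hk2 => ?_⟩
  · rcases hs.eq_or_lt with rfl | hs
    exacts [by simp [hG₀, hg₀0], (hpos s hs).le]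
  · rcases hk2.eq_or_lt with hk2 | hk2
    · exact tendsto_div_mul_of_eq_two hk2.symm ha₀pos hak ha₁ hg₀ hg₀top hG₀'
        (hα hk2.ge).2 (hα hk2.ge).1
    · exact tendsto_div_mul_of_two_lt hk2 ha₀pos hak ha₁ hg₀ hg₀top (hpos 1 one_pos)
        ((eventually_ge_atTop 1).mono fun s hs =>
          hmono (mem_Ici.2 zero_le_one) (mem_Ici.2 (zero_le_one.trans hs)) hs)
  · exact tendsto_div_mul_of_lt_two (by linarith) hk2 ha₀pos hak ha₁ hg₀ hg₀top hG₀'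
      (hα hk2.le).2 (hα hk2.le).1
end

section
/- Let a ∈ C²(ℝ) with a(s) ≥ ν > 0 for all s ∈ ℝ, let k > 0 and a₁ > 0, assume lim_{s→+∞} a(s)/s^k = a₁, and let g be the solution of g'(s) = 1/√(a(g(s))), g(0) = 0. Then lim_{s→+∞} s g'(s)/g(s) = 2/(k+2). -/
/-!
Put `F y = ∫₀ʸ √(a t) dt`. The ODE says exactly that `F (g s) = s`, so `g → ∞` and
`s g'(s) / g(s) = F(g s) / (g s · √(a (g s)))`. Since `√(a t) ~ √a₁ · t^(k/2)`, integrating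
the equivalence gives `F y ~ √a₁ · y^(k/2+1) / (k/2+1) ~ y √(a y) / (k/2+1)`.
-/

open Filter Real Topology MeasureTheory intervalIntegral Asymptotics

theorem isLittleO_integral_of_isLittleO {h φ : ℝ → ℝ}
    (hh : ∀ y, IntervalIntegrable h volume 0 y) (hφ : ∀ y, IntervalIntegrable φ volume 0 y)
    (hφ_nonneg : ∀ᶠ t in atTop, 0 ≤ φ t)
    (hΦ : Tendsto (fun y => ∫ t in 0..y, φ t) atTop atTop) (hhφ : h =o[atTop] φ) :
    (fun y => ∫ t in 0..y, h t) =o[atTop] fun y => ∫ t in 0..y, φ t := by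
  refine IsLittleO.of_bound fun c hc => ?_
  set Φ := fun y => ∫ t in 0..y, φ t
  obtain ⟨Y, hY⟩ := ((hhφ.bound (half_pos hc)).and hφ_nonneg).exists_forall_of_atTop
  have h_tail : ∀ y, Y ≤ y → ‖∫ t in Y..y, h t‖ ≤ c / 2 * (Φ y - Φ Y) := by
    intro y hy
    rw [integral_interval_sub_left (hφ y) (hφ Y), ← intervalIntegral.integral_const_mul]
    refine norm_integral_le_of_norm_le hy (ae_of_all _ fun t ht => ?_)
      (((hφ Y).symm.trans (hφ y)).const_mul _)
    obtain ⟨hht, hφt⟩ := hY t ht.1.le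
    rwa [norm_of_nonneg hφt] at hht
  set C := ‖∫ t in 0..Y, h t‖ + c / 2 * |Φ Y| with hC_def
  filter_upwards [eventually_ge_atTop Y, hΦ.eventually_ge_atTop (2 * C / c)] with y hy hΦy
  have hΦy_nonneg : 0 ≤ Φ y := le_trans (by positivity) hΦy
  calc ‖∫ t in 0..y, h t‖
      = ‖(∫ t in 0..Y, h t) + ∫ t in Y..y, h t‖ := by
        rw [integral_add_adjacent_intervals (hh Y) ((hh Y).symm.trans (hh y))]
    _ ≤ ‖∫ t in 0..Y, h t‖ + c / 2 * (Φ y - Φ Y) :=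
        (norm_add_le _ _).trans (by gcongr; exact h_tail y hy)
    _ ≤ C + c / 2 * Φ y := by
        nlinarith [mul_le_mul_of_nonneg_left (neg_le_abs (Φ Y)) (half_pos hc).le]
    _ ≤ c * ‖Φ y‖ := by
        rw [norm_of_nonneg hΦy_nonneg]
        have := (div_le_iff₀ hc).1 hΦy
        nlinarith

theorem Asymptotics.IsEquivalent.integral_atTop {u v : ℝ → ℝ}
    (hu : ∀ y, IntervalIntegrable u volume 0 y) (hv : ∀ y, IntervalIntegrable v volume 0 y)
    (hv_nonneg : ∀ᶠ t in atTop, 0 ≤ v t)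
    (hV : Tendsto (fun y => ∫ t in 0..y, v t) atTop atTop) (huv : u ~[atTop] v) :
    (fun y => ∫ t in 0..y, u t) ~[atTop] fun y => ∫ t in 0..y, v t :=
  (isLittleO_integral_of_isLittleO (fun y => (hu y).sub (hv y)) hv hv_nonneg hV
    huv.isLittleO).congr_left fun y => integral_sub (hu y) (hv y)

theorem tendsto_integral_div_mul_self {f : ℝ → ℝ} {p L : ℝ}
    (hf : ∀ y, IntervalIntegrable f volume 0 y) (hp : -1 < p) (hL : 0 < L)
    (hfL : Tendsto (fun t => f t / t ^ p) atTop (𝓝 L)) :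
    Tendsto (fun y => (∫ t in 0..y, f t) / (y * f y)) atTop (𝓝 (1 / (p + 1))) := by
  have hp1 : 0 < p + 1 := by linarith
  have h_power : ∀ y : ℝ, ∫ t in 0..y, L * t ^ p = L * y ^ (p + 1) / (p + 1) := fun y => by
    rw [intervalIntegral.integral_const_mul, integral_rpow (Or.inl hp), zero_rpow hp1.ne',
      sub_zero, mul_div_assoc]
  have hf_equiv : f ~[atTop] fun t => L * t ^ p := by
    refine isEquivalent_of_tendsto_one ?_
    have h := hfL.div_const L
    rw [div_self hL.ne'] at h
    refine h.congr' ?_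
    filter_upwards [eventually_gt_atTop 0] with t ht
    rw [Pi.div_apply, div_div, mul_comm]
  have h_int_equiv :
      (fun y => ∫ t in 0..y, f t) ~[atTop] fun y => L * y ^ (p + 1) / (p + 1) := by
    have h := hf_equiv.integral_atTop hf (fun y => (intervalIntegrable_rpow' hp).const_mul L)
      (by filter_upwards [eventually_ge_atTop 0] with t ht; positivity)
      (by simpa only [h_power] using
        ((tendsto_rpow_atTop hp1).const_mul_atTop hL).atTop_div_const hp1)
    simpa only [h_power] using h
  have h_den_equiv : (fun y => y * f y) ~[atTop] fun y => L * y ^ (p + 1) := by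
    refine (IsEquivalent.refl.mul hf_equiv).congr_right ?_
    filter_upwards [eventually_gt_atTop 0] with y hy
    simp only [Pi.mul_apply, rpow_add_one hy.ne']
    ring
  refine (h_int_equiv.div h_den_equiv).symm.tendsto_nhds (tendsto_const_nhds.congr' ?_)
  filter_upwards [eventually_gt_atTop 0] with y hy
  have := rpow_pos_of_pos hy (p + 1)
  simp only [Pi.div_apply]
  field_simp

theorem apply_comp_eq_add_of_hasDerivAt_one_div {F φ g : ℝ → ℝ}
    (hF : ∀ y, HasDerivAt F (φ y) y) (hφ : ∀ y, φ y ≠ 0)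
    (hg : ∀ s, HasDerivAt g (1 / φ (g s)) s) (s : ℝ) : F (g s) = F (g 0) + s := by
  have hderiv : ∀ s, HasDerivAt (fun s => F (g s) - s) 0 s := fun s => by
    have h := ((hF (g s)).comp s (hg s)).sub (hasDerivAt_id' s)
    rwa [mul_one_div_cancel (hφ (g s)), sub_self] at h
  have := is_const_of_deriv_eq_zero (fun x => (hderiv x).differentiableAt)
    (fun x => (hderiv x).deriv) s 0
  linarith

theorem s_gprime_over_g_limit
    (a : ℝ → ℝ) (ν : ℝ) (hν : 0 < ν)
    (ha : ContDiff ℝ 2 a) (hbound : ∀ s, ν ≤ a s)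
    (k a₁ : ℝ) (hk : 0 < k) (ha₁ : 0 < a₁)
    (hlim : Tendsto (fun s : ℝ => a s / s ^ k) atTop (𝓝 a₁))
    (g : ℝ → ℝ)
    (hg : ∀ s, HasDerivAt g (1 / Real.sqrt (a (g s))) s) (hg0 : g 0 = 0) :
    Tendsto (fun s : ℝ => s * deriv g s / g s) atTop (𝓝 (2 / (k + 2))) := by
  have hsqrt_pos : ∀ y, 0 < √(a y) := fun y => sqrt_pos.2 (hν.trans_le (hbound y))
  have hsqrt_cont : Continuous fun t => √(a t) := ha.continuous.sqrt
  set F := fun y => ∫ t in 0..y, √(a t)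
  have hF_deriv : ∀ y, HasDerivAt F (√(a y)) y := fun y =>
    (hsqrt_cont.integral_hasStrictDerivAt 0 y).hasDerivAt
  have hFg : ∀ s, F (g s) = s := fun s => by
    simpa [hg0, F] using
      apply_comp_eq_add_of_hasDerivAt_one_div hF_deriv (fun y => (hsqrt_pos y).ne') hg s
  have hF_mono : StrictMono F := strictMono_of_hasDerivAt_pos hF_deriv hsqrt_pos
  have hg_top : Tendsto g atTop atTop := tendsto_atTop_atTop.2 fun b =>
    ⟨F b, fun s hs => hF_mono.le_iff_le.1 (hs.trans_eq (hFg s).symm)⟩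
  have hsqrt_a : Tendsto (fun t => √(a t) / t ^ (k / 2)) atTop (𝓝 √a₁) := by
    refine ((continuous_sqrt.tendsto a₁).comp hlim).congr' ?_
    filter_upwards [eventually_gt_atTop 0] with t ht
    rw [Function.comp_apply, sqrt_div' _ (rpow_nonneg ht.le k), sqrt_eq_rpow (t ^ k),
      ← rpow_mul ht.le, mul_one_div]
  have hF_ratio : Tendsto (fun y => F y / (y * √(a y))) atTop (𝓝 (1 / (k / 2 + 1))) :=
    tendsto_integral_div_mul_self (fun y => hsqrt_cont.intervalIntegrable 0 y)
      (by linarith) (sqrt_pos.2 ha₁) hsqrt_a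
  have h_exponent : 1 / (k / 2 + 1) = 2 / (k + 2) := by field_simp
  rw [← h_exponent]
  refine (hF_ratio.comp hg_top).congr fun s => ?_
  simp only [Function.comp_apply, (hg s).deriv, hFg s]
  ring
end
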